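/- arXiv:1505.07839 — 9 statements merged into one kernel-verified Lean document; each statement's English description precedes it below -/
import Mathlib

section
/- Fix n ≥ 1. The set of holographic entropy vectors of graph models on n regions is a convex cone: if s and s' are holographic entropy vectors of graph models on n regions and λ ≥ 0 is a real number, then s + s' and λ·s are also holographic entropy vectors of graph models on n regions. (The sum is realized by the disjoint union of the two graph models, and the scaling by multiplying all edge weights by λ.) -/
open Classical

/-- A *graph model* on `n` regions: a finite graph with symmetric nonnegative edge
weights `w` (weight `0` meaning "no edge") and a partial coloring of the vertices by
the `n+1` boundary colors; `color v = none` means `v` is a bulk vertex, color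
`Fin.castSucc i` represents boundary region `i ∈ {1,…,n}` and color `Fin.last n`
represents the purifying region `n+1`. -/
structure GraphModel (n : ℕ) where
  V : Type
  [fintypeV : Fintype V]
  w : V → V → ℝ
  symm : ∀ u v, w u v = w v u
  nonneg : ∀ u v, 0 ≤ w u v
  color : V → Option (Fin (n + 1))

attribute [instance] GraphModel.fintypeV

/-- `|C(W)|`: the total weight of the edges with exactly one endpoint in `W`
(each unordered crossing edge `{u,v}` is counted exactly once, via its ordering
with `u ∈ W` and `v ∉ W`). -/
noncomputable def GraphModel.cutWeight {n : ℕ} (G : GraphModel n) (W : Set G.V) : ℝ :=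
  ∑ u : G.V, ∑ v : G.V, if u ∈ W ∧ v ∉ W then G.w u v else 0

/-- `W` is an `I`-cut: `W` contains precisely the boundary vertices whose color lies
in `I ⊆ {1,…,n}`. -/
def GraphModel.IsCut {n : ℕ} (G : GraphModel n) (I : Finset (Fin n)) (W : Set G.V) : Prop :=
  ∀ v c, G.color v = some c → (v ∈ W ↔ ∃ i ∈ I, Fin.castSucc i = c)

/-- The discrete entropy `S*(I)`: the minimal weight of an `I`-cut. -/
noncomputable def GraphModel.entropy {n : ℕ} (G : GraphModel n) (I : Finset (Fin n)) : ℝ :=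
  sInf (G.cutWeight '' {W | G.IsCut I W})

/-- The holographic entropy vector of a graph model: the collection of all discrete
entropies `S*(I)` of nonempty subsets `I ⊆ {1,…,n}`. -/
noncomputable def GraphModel.entropyVector {n : ℕ} (G : GraphModel n)
    (I : {I : Finset (Fin n) // I.Nonempty}) : ℝ :=
  G.entropy I.1

/-! The cuts of a disjoint union are exactly the pairs of cuts of the two parts, and cut
weights add, so its set of cut weights is the Minkowski sum of the two sets of cut weights and
the minima add. Multiplying all weights by `c ≥ 0` multiplies every cut weight, hence the
minimum, by `c`. -/

namespace GraphModel

open scoped Pointwise NNReal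

variable {n : ℕ} (G G' : GraphModel n) (I : Finset (Fin n))

lemma setOf_isCut_nonempty : {W | G.IsCut I W}.Nonempty :=
  ⟨{v | ∃ i ∈ I, G.color v = some i.castSucc}, fun v c hc => by simp [hc, eq_comm]⟩

def disjointUnion : GraphModel n where
  V := G.V ⊕ G'.V
  w
    | .inl a, .inl b => G.w a b
    | .inr a, .inr b => G'.w a b
    | _, _ => 0
  symm := by rintro (a | a) (b | b) <;> simp [G.symm, G'.symm]
  nonneg := by rintro (a | a) (b | b) <;> simp [G.nonneg, G'.nonneg]
  color := Sum.elim G.color G'.color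

lemma cutWeight_disjointUnion (W : Set (G.disjointUnion G').V) :
    (G.disjointUnion G').cutWeight W =
      G.cutWeight (Sum.inl ⁻¹' W) + G'.cutWeight (Sum.inr ⁻¹' W) := by
  change (∑ u : G.V ⊕ G'.V, ∑ v : G.V ⊕ G'.V, _) = _
  simp [cutWeight, disjointUnion, Fintype.sum_sum_type]
  rfl

lemma isCut_disjointUnion_iff (W : Set (G.disjointUnion G').V) :
    (G.disjointUnion G').IsCut I W ↔
      G.IsCut I (Sum.inl ⁻¹' W) ∧ G'.IsCut I (Sum.inr ⁻¹' W) :=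
  ⟨fun h => ⟨fun v => h (.inl v), fun v => h (.inr v)⟩,
    fun h => Sum.rec h.1 h.2⟩

lemma image_cutWeight_disjointUnion :
    (G.disjointUnion G').cutWeight '' {W | (G.disjointUnion G').IsCut I W} =
      G.cutWeight '' {W | G.IsCut I W} + G'.cutWeight '' {W | G'.IsCut I W} := by
  ext x
  constructor
  · rintro ⟨W, hW, rfl⟩
    obtain ⟨hW₁, hW₂⟩ := (isCut_disjointUnion_iff G G' I W).1 hW
    rw [cutWeight_disjointUnion]
    exact Set.add_mem_add ⟨_, hW₁, rfl⟩ ⟨_, hW₂, rfl⟩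
  · rintro ⟨_, ⟨W₁, hW₁, rfl⟩, _, ⟨W₂, hW₂, rfl⟩, rfl⟩
    exact ⟨Sum.elim W₁ W₂, (isCut_disjointUnion_iff G G' I _).2 ⟨hW₁, hW₂⟩,
      cutWeight_disjointUnion G G' _⟩

lemma entropy_disjointUnion :
    (G.disjointUnion G').entropy I = G.entropy I + G'.entropy I := by
  rw [entropy, image_cutWeight_disjointUnion]
  exact csInf_add ((G.setOf_isCut_nonempty I).image _) (Set.toFinite _).bddBelow
    ((G'.setOf_isCut_nonempty I).image _) (Set.toFinite _).bddBelow

def scale (c : ℝ≥0) : GraphModel n where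
  V := G.V
  w u v := c * G.w u v
  symm u v := by rw [G.symm]
  nonneg u v := mul_nonneg c.2 (G.nonneg u v)
  color := G.color

lemma cutWeight_scale (c : ℝ≥0) (W : Set G.V) :
    (G.scale c).cutWeight W = c * G.cutWeight W := by
  simp only [cutWeight, scale, Finset.mul_sum, mul_ite, mul_zero]
  rfl

lemma entropy_scale (c : ℝ≥0) : (G.scale c).entropy I = c * G.entropy I := by
  have : (G.scale c).cutWeight '' {W | (G.scale c).IsCut I W} =
      (c : ℝ) • G.cutWeight '' {W | G.IsCut I W} := by
    rw [← Set.image_smul, Set.image_image]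
    exact congrArg (· '' _) (funext (G.cutWeight_scale c))
  rw [entropy, this, Real.sInf_smul_of_nonneg c.coe_nonneg]
  rfl

end GraphModel

theorem stmt0_general (n : ℕ)
    (s s' : {I : Finset (Fin n) // I.Nonempty} → ℝ) (lam : ℝ) (hlam : 0 ≤ lam)
    (hs : ∃ G : GraphModel n, G.entropyVector = s)
    (hs' : ∃ G : GraphModel n, G.entropyVector = s') :
    (∃ G : GraphModel n, G.entropyVector = s + s') ∧
    (∃ G : GraphModel n, G.entropyVector = lam • s) := by
  obtain ⟨G, rfl⟩ := hs
  obtain ⟨G', rfl⟩ := hs'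
  exact ⟨⟨G.disjointUnion G', funext fun I => G.entropy_disjointUnion G' I.1⟩,
    ⟨G.scale ⟨lam, hlam⟩, funext fun I => G.entropy_scale I.1 ⟨lam, hlam⟩⟩⟩

/-- For fixed `n ≥ 1`, the set of holographic entropy vectors of graph
models on `n` regions is a convex cone: it is closed under addition and under scaling
by nonnegative reals. -/
theorem stmt0 (n : ℕ) (hn : 1 ≤ n)
    (s s' : {I : Finset (Fin n) // I.Nonempty} → ℝ) (lam : ℝ) (hlam : 0 ≤ lam)
    (hs : ∃ G : GraphModel n, G.entropyVector = s)
    (hs' : ∃ G : GraphModel n, G.entropyVector = s') :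
    (∃ G : GraphModel n, G.entropyVector = s + s') ∧
    (∃ G : GraphModel n, G.entropyVector = lam • s) :=
  stmt0_general n s s' lam hlam hs hs'
end

section
/- For every n ≥ 1 and every graph model on n regions with holographic entropy vector s, there exists a graph model with the same holographic entropy vector s whose underlying graph is the complete graph on the vertex set {0,1}^{𝓘_n} of bitstrings indexed by the set 𝓘_n of nonempty subsets of {1,…,n} (hence on 2^{2^n−1} vertices), whose boundary vertices are the bitstrings x_1,…,x_{n+1} defined by (x_i)_I = 1 if and only if i ∈ I (so that x_{n+1} is the all-zeros bitstring), with x_i colored i for each i ∈ {1,…,n+1}, and with a suitable choice of nonnegative edge weights. -/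
open Classical

/-- The vertex set of the universal complete graph: bitstrings indexed by the
nonempty subsets of `{1,…,n}`. -/
abbrev UVertex (n : ℕ) := {I : Finset (Fin n) // I.Nonempty} → Bool

/-- The boundary bitstring `x_i` for `i ∈ {1,…,n+1}`: `(x_i)_I = 1` iff `i ∈ I`
(so `x_{n+1} = Fin.last n` gives the all-zeros bitstring). -/
def occVec (n : ℕ) (i : Fin (n + 1)) : UVertex n :=
  fun I => decide (∃ j ∈ I.1, Fin.castSucc j = i)


lemma sum_cut_pushforward {A B : Type} [Fintype A] [Fintype B] [DecidableEq B]
    (φ : A → B) (w : A → A → ℝ) (W : Set B) :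
    (∑ x : B, ∑ y : B, if x ∈ W ∧ y ∉ W then
        (∑ u : A, ∑ v : A, if φ u = x ∧ φ v = y then w u v else 0) else 0)
    = ∑ u : A, ∑ v : A, if φ u ∈ W ∧ φ v ∉ W then w u v else 0 := by
  have h1 : ∀ x y : B, (if x ∈ W ∧ y ∉ W then
        (∑ u : A, ∑ v : A, if φ u = x ∧ φ v = y then w u v else 0) else 0)
      = ∑ u : A, ∑ v : A, if φ u = x ∧ φ v = y ∧ x ∈ W ∧ y ∉ W then w u v else 0 := by
    intro x y
    split_ifs with h
    · refine Finset.sum_congr rfl fun u _ => Finset.sum_congr rfl fun v _ => ?_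
      by_cases h2 : φ u = x ∧ φ v = y
      · rw [if_pos h2, if_pos ⟨h2.1, h2.2, h⟩]
      · rw [if_neg h2, if_neg (by tauto)]
    · symm
      refine Finset.sum_eq_zero fun u _ => Finset.sum_eq_zero fun v _ => ?_
      rw [if_neg (by tauto)]
  have h2 : ∀ u v : A, (∑ x : B, ∑ y : B, if φ u = x ∧ φ v = y ∧ x ∈ W ∧ y ∉ W then w u v else 0)
      = if φ u ∈ W ∧ φ v ∉ W then w u v else 0 := by
    intro u v
    rw [Finset.sum_eq_single (φ u)]
    · rw [Finset.sum_eq_single (φ v)]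
      · by_cases h : φ u ∈ W ∧ φ v ∉ W
        · rw [if_pos ⟨rfl, rfl, h⟩, if_pos h]
        · rw [if_neg (by tauto), if_neg h]
      · intro b _ hb; rw [if_neg (by tauto)]
      · intro hb; exact absurd (Finset.mem_univ _) hb
    · intro b _ hb
      refine Finset.sum_eq_zero fun y _ => ?_
      rw [if_neg (by tauto)]
    · intro hb; exact absurd (Finset.mem_univ _) hb
  have eB : ∀ (g : B → B → ℝ), (∑ x : B, ∑ y : B, g x y) = ∑ p : B × B, g p.1 p.2 :=
    fun g => (Fintype.sum_prod_type (f := fun p : B × B => g p.1 p.2)).symm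
  have eA : ∀ (g : A → A → ℝ), (∑ x : A, ∑ y : A, g x y) = ∑ p : A × A, g p.1 p.2 :=
    fun g => (Fintype.sum_prod_type (f := fun p : A × A => g p.1 p.2)).symm
  calc (∑ x : B, ∑ y : B, if x ∈ W ∧ y ∉ W then
        (∑ u : A, ∑ v : A, if φ u = x ∧ φ v = y then w u v else 0) else 0)
      = ∑ x : B, ∑ y : B, ∑ u : A, ∑ v : A,
          if φ u = x ∧ φ v = y ∧ x ∈ W ∧ y ∉ W then w u v else 0 :=
        Finset.sum_congr rfl fun x _ => Finset.sum_congr rfl fun y _ => h1 x y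
    _ = ∑ p : B × B, ∑ q : A × A,
          if φ q.1 = p.1 ∧ φ q.2 = p.2 ∧ p.1 ∈ W ∧ p.2 ∉ W then w q.1 q.2 else 0 := by
        rw [eB (fun x y => ∑ u : A, ∑ v : A,
          if φ u = x ∧ φ v = y ∧ x ∈ W ∧ y ∉ W then w u v else 0)]
        exact Finset.sum_congr rfl fun p _ => eA _
    _ = ∑ q : A × A, ∑ p : B × B,
          if φ q.1 = p.1 ∧ φ q.2 = p.2 ∧ p.1 ∈ W ∧ p.2 ∉ W then w q.1 q.2 else 0 :=
        Finset.sum_comm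
    _ = ∑ u : A, ∑ v : A, if φ u ∈ W ∧ φ v ∉ W then w u v else 0 := by
        rw [← eA (fun u v => ∑ p : B × B,
          if φ u = p.1 ∧ φ v = p.2 ∧ p.1 ∈ W ∧ p.2 ∉ W then w u v else 0)]
        exact Finset.sum_congr rfl fun u _ => Finset.sum_congr rfl fun v _ =>
          ((eB (fun x y => if φ u = x ∧ φ v = y ∧ x ∈ W ∧ y ∉ W then w u v else 0)).symm).trans
            (h2 u v)

lemma occVec_inj (n : ℕ) : Function.Injective (occVec n) := by
  intro i i' h
  rcases Fin.eq_castSucc_or_eq_last i with ⟨j, rfl⟩ | rfl <;>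
    rcases Fin.eq_castSucc_or_eq_last i' with ⟨j', rfl⟩ | rfl
  · have := congrFun h ⟨{j}, Finset.singleton_nonempty j⟩
    simp [occVec, Fin.castSucc_inj] at this
    simp [this]
  · have := congrFun h ⟨{j}, Finset.singleton_nonempty j⟩
    simp [occVec, (Fin.castSucc_lt_last j).ne] at this
  · have := congrFun h ⟨{j'}, Finset.singleton_nonempty j'⟩
    simp [occVec, (Fin.castSucc_lt_last j').ne] at this
  · rfl

/-- Any holographic entropy vector of a graph model on `n` regions can
be realized on the complete graph with vertex set `{0,1}^{𝓘_n}` (hence `2^(2^n - 1)`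
vertices), boundary vertices `x_1, …, x_{n+1}` with `x_i` colored `i`, and suitable
nonnegative edge weights. -/
theorem stmt1 (n : ℕ) (hn : 1 ≤ n) (G : GraphModel n) :
    Fintype.card (UVertex n) = 2 ^ (2 ^ n - 1) ∧
    ∃ (w : UVertex n → UVertex n → ℝ) (hsymm : ∀ u v, w u v = w v u)
      (hnn : ∀ u v, 0 ≤ w u v) (color : UVertex n → Option (Fin (n + 1))),
      (∀ i : Fin (n + 1), color (occVec n i) = some i) ∧
      (∀ x : UVertex n, (∀ i : Fin (n + 1), x ≠ occVec n i) → color x = none) ∧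
      GraphModel.entropyVector
        { V := UVertex n, fintypeV := inferInstance, w := w, symm := hsymm,
          nonneg := hnn, color := color } = G.entropyVector := by
  constructor
  · -- cardinality
    have h1 : Fintype.card {I : Finset (Fin n) // ¬ I = ∅} = 2 ^ n - 1 := by
      have hc := Fintype.card_subtype_compl (p := fun I : Finset (Fin n) => I = ∅)
      have he : Fintype.card {I : Finset (Fin n) // I = ∅} = 1 := Fintype.card_subtype_eq ∅
      have hall : Fintype.card (Finset (Fin n)) = 2 ^ n := by
        rw [Fintype.card_finset, Fintype.card_fin]
      rw [hc, he, hall]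
    have h2 : Fintype.card {I : Finset (Fin n) // I.Nonempty}
        = Fintype.card {I : Finset (Fin n) // ¬ I = ∅} := by
      apply Fintype.card_congr
      exact Equiv.subtypeEquivRight fun I => by
        simp [Finset.nonempty_iff_ne_empty]
    rw [Fintype.card_fun, h2, h1, Fintype.card_bool]
  · -- choose minimum cuts
    have hex : ∀ I : Finset (Fin n), ∃ W : Set G.V, G.IsCut I W ∧ G.cutWeight W = G.entropy I := by
      intro I
      set W₀ : Set G.V := {v | ∃ c, G.color v = some c ∧ ∃ i ∈ I, Fin.castSucc i = c} with hW₀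
      have hcut : G.IsCut I W₀ := by
        intro v c hc
        constructor
        · rintro ⟨c', hc', h⟩
          rw [hc] at hc'
          exact (Option.some.inj hc') ▸ h
        · intro h
          exact ⟨c, hc, h⟩
      have hne : (G.cutWeight '' {W | G.IsCut I W}).Nonempty :=
        ⟨G.cutWeight W₀, Set.mem_image_of_mem _ hcut⟩
      have hfin : (G.cutWeight '' {W | G.IsCut I W}).Finite := Set.toFinite _
      obtain ⟨W, hW, hWe⟩ := hne.csInf_mem hfin
      exact ⟨W, hW, hWe⟩
    choose minCut hminCut hminW using hex
    -- the pushforward map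
    set φ : G.V → UVertex n := fun v I => decide (v ∈ minCut I.1) with hφdef
    set w' : UVertex n → UVertex n → ℝ := fun x y =>
      ∑ u : G.V, ∑ v : G.V, if φ u = x ∧ φ v = y then G.w u v else 0 with hw'def
    have hsymm : ∀ x y, w' x y = w' y x := by
      intro x y
      show (∑ u : G.V, ∑ v : G.V, if φ u = x ∧ φ v = y then G.w u v else 0)
        = ∑ u : G.V, ∑ v : G.V, if φ u = y ∧ φ v = x then G.w u v else 0
      rw [Finset.sum_comm]
      refine Finset.sum_congr rfl fun u _ => Finset.sum_congr rfl fun v _ => ?_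
      exact if_congr and_comm (G.symm v u) rfl
    have hnn : ∀ x y, 0 ≤ w' x y := by
      intro x y
      refine Finset.sum_nonneg fun u _ => Finset.sum_nonneg fun v _ => ?_
      split_ifs
      · exact G.nonneg u v
      · exact le_refl 0
    -- the coloring
    set color' : UVertex n → Option (Fin (n + 1)) := fun x =>
      if h : ∃ i : Fin (n + 1), x = occVec n i then some (Classical.choose h) else none
      with hcolor'
    have hcolOcc : ∀ i, color' (occVec n i) = some i := by
      intro i
      have h : ∃ j : Fin (n + 1), occVec n i = occVec n j := ⟨i, rfl⟩
      show (if h : ∃ j : Fin (n + 1), occVec n i = occVec n j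
          then some (Classical.choose h) else none) = some i
      rw [dif_pos h]
      exact congrArg some ((occVec_inj n (Classical.choose_spec h)).symm)
    have hcolNone : ∀ x, (∀ i, x ≠ occVec n i) → color' x = none := by
      intro x hx
      show (if h : ∃ i : Fin (n + 1), x = occVec n i
          then some (Classical.choose h) else none) = none
      rw [dif_neg]
      rintro ⟨i, hi⟩
      exact hx i hi
    have hcolored : ∀ x c, color' x = some c → x = occVec n c := by
      intro x c hx
      rw [hcolor'] at hx
      simp only at hx
      split_ifs at hx with h
      · rw [← Option.some.inj hx]
        exact Classical.choose_spec h
    -- the universal graph model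
    let G' : GraphModel n :=
      { V := UVertex n, fintypeV := inferInstance, w := w', symm := hsymm,
        nonneg := hnn, color := color' }
    refine ⟨w', hsymm, hnn, color', hcolOcc, hcolNone, ?_⟩
    show G'.entropyVector = G.entropyVector
    -- pushforward facts
    have hφocc : ∀ v c, G.color v = some c → φ v = occVec n c := by
      intro v c hc
      funext J
      have h := (hminCut J.1) v c hc
      show decide (v ∈ minCut J.1) = decide (∃ j ∈ J.1, Fin.castSucc j = c)
      exact decide_eq_decide.mpr h
    have hcw : ∀ W' : Set (UVertex n), G'.cutWeight W' = G.cutWeight (φ ⁻¹' W') := by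
      intro W'
      show (∑ x : UVertex n, ∑ y : UVertex n, if x ∈ W' ∧ y ∉ W' then
          (∑ u : G.V, ∑ v : G.V, if φ u = x ∧ φ v = y then G.w u v else 0) else 0)
        = ∑ u : G.V, ∑ v : G.V, if u ∈ φ ⁻¹' W' ∧ v ∉ φ ⁻¹' W' then G.w u v else 0
      exact sum_cut_pushforward φ G.w W'
    have hpre : ∀ (I : Finset (Fin n)) (W' : Set (UVertex n)),
        G'.IsCut I W' → G.IsCut I (φ ⁻¹' W') := by
      intro I W' hW' v c hc
      have h1 := hW' (occVec n c) c (hcolOcc c)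
      show φ v ∈ W' ↔ _
      rw [hφocc v c hc]
      exact h1
    funext I
    show G'.entropy I.1 = G.entropy I.1
    -- the canonical cut in the universal graph
    set Wc : Set (UVertex n) := {x | x I = true} with hWc
    have hWcCut : G'.IsCut I.1 Wc := by
      intro x c hx
      rw [hcolored x c hx]
      show occVec n c I = true ↔ _
      simp [occVec]
    have hWcPre : φ ⁻¹' Wc = minCut I.1 := by
      ext v
      show φ v I = true ↔ _
      simp [hφdef]
    have hWcW : G'.cutWeight Wc = G.entropy I.1 := by
      rw [hcw, hWcPre, hminW]
    have hmemWc : G'.cutWeight Wc ∈ G'.cutWeight '' {W | G'.IsCut I.1 W} :=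
      Set.mem_image_of_mem _ hWcCut
    apply le_antisymm
    · calc G'.entropy I.1 ≤ G'.cutWeight Wc := csInf_le (Set.toFinite _).bddBelow hmemWc
        _ = G.entropy I.1 := hWcW
    · refine csInf_le_csInf (Set.toFinite _).bddBelow ⟨G'.cutWeight Wc, hmemWc⟩ ?_
      rintro r ⟨W', hW', rfl⟩
      exact ⟨φ ⁻¹' W', hpre I.1 W' hW', (hcw W').symm⟩
end

section
/- For every n ≥ 1, the set C_n ⊆ ℝ^{2^n−1} of holographic entropy vectors of graph models on n regions is a rational polyhedral convex cone: there exist finitely many vectors v_1,…,v_m ∈ ℝ^{2^n−1} with rational entries such that C_n = { Σ_{j=1}^m λ_j v_j : λ_1,…,λ_m ≥ 0 }. In particular, C_n is closed and is cut out by finitely many homogeneous linear inequalities with integer coefficients. -/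
open Classical

/-!
Scaling the weights and taking disjoint unions show that the entropy vectors form a convex cone.
A graph model can be contracted, without changing its entropies, onto a fixed finite set of
*profiles*: each vertex is replaced by its color together with the set of subsystems `I` whose
chosen minimal `I`-cut contains it. On this fixed vertex set, once a candidate minimal cut `σ I`
is fixed for every `I`, the admissible weights form a cone cut out by integer inequalities, and on
it the entropy vector is an integer linear function of the weights. By Minkowski's theorem each
of these finitely many cells is spanned by finitely many integer vectors, whose images span the
entropy cone; Weyl's theorem then describes it by finitely many integer inequalities. Weyl's
theorem follows from Fourier–Motzkin elimination of the coefficients one at a time, and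
Minkowski's from Weyl's by duality.
-/

noncomputable section

section IntegerCones

variable {ι κ : Type*}

def intVec (a : ι → ℤ) : ι → ℝ := fun t => a t

@[simp] lemma intVec_apply (a : ι → ℤ) (t : ι) : intVec a t = a t := rfl

@[simp] lemma intVec_zero : intVec (0 : ι → ℤ) = 0 := by
  ext; simp

lemma intVec_neg (a : ι → ℤ) : intVec (-a) = -intVec a := by
  ext; simp

lemma intVec_sub (a b : ι → ℤ) : intVec (a - b) = intVec a - intVec b := by
  ext; simp

lemma intVec_smul (z : ℤ) (a : ι → ℤ) : intVec (z • a) = (z : ℝ) • intVec a := by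
  ext; simp

lemma intVec_single [DecidableEq ι] (t : ι) (z : ℤ) :
    intVec (Pi.single t z) = Pi.single t (z : ℝ) := by
  ext s
  by_cases h : s = t <;> simp [h]

def intSpan [Fintype κ] (g : κ → ι → ℤ) : Set (ι → ℝ) :=
  {x | ∃ lam : κ → ℝ, (∀ j, 0 ≤ lam j) ∧ x = ∑ j, lam j • intVec (g j)}

lemma intVec_mem_intSpan [Fintype κ] (g : κ → ι → ℤ) (j : κ) : intVec (g j) ∈ intSpan g := by
  refine ⟨Pi.single j 1, fun k => ?_, ?_⟩
  · by_cases h : k = j <;> simp [h]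
  · simp [Pi.single_apply]

lemma intSpan_of_isEmpty [Fintype κ] [IsEmpty κ] (g : κ → ι → ℤ) : intSpan g = {0} := by
  simp [intSpan]

lemma intSpan_subset [Fintype κ] (g : κ → ι → ℤ) (C : PointedCone ℝ (ι → ℝ))
    (hg : ∀ j, intVec (g j) ∈ C) : intSpan g ⊆ C := by
  rintro _ ⟨lam, hlam, rfl⟩
  exact Submodule.sum_mem C fun j _ => C.smul_mem (hlam j) (hg j)

lemma intSpan_comp_subset [Fintype κ] {κ' : Type*} [Fintype κ'] (g : κ → ι → ℤ) (f : κ' → κ) :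
    intSpan (g ∘ f) ⊆ intSpan g := by
  rintro _ ⟨lam, hlam, rfl⟩
  refine ⟨fun k => ∑ j with f j = k, lam j, fun k => Finset.sum_nonneg fun j _ => hlam j, ?_⟩
  rw [← Finset.sum_fiberwise Finset.univ f]
  refine Finset.sum_congr rfl fun k _ => ?_
  rw [Finset.sum_smul]
  exact Finset.sum_congr rfl fun j hj => by rw [Function.comp_apply, (Finset.mem_filter.1 hj).2]

lemma intSpan_comp_equiv [Fintype κ] {κ' : Type*} [Fintype κ'] (g : κ → ι → ℤ) (e : κ' ≃ κ) :
    intSpan (g ∘ e) = intSpan g := by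
  refine (intSpan_comp_subset g e).antisymm ?_
  simpa [Function.comp_assoc] using intSpan_comp_subset (g ∘ e) e.symm

lemma mem_intSpan_succ_iff {m : ℕ} (g : Fin (m + 1) → ι → ℤ) (x : ι → ℝ) :
    x ∈ intSpan g ↔ ∃ t : ℝ, 0 ≤ t ∧ x - t • intVec (g 0) ∈ intSpan (Fin.tail g) := by
  constructor
  · rintro ⟨lam, hlam, rfl⟩
    refine ⟨lam 0, hlam 0, Fin.tail lam, fun j => hlam _, ?_⟩
    simp [Fin.sum_univ_succ, Fin.tail]
  · rintro ⟨t, ht, lam, hlam, hx⟩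
    refine ⟨Fin.cons t lam, Fin.cases ht hlam, ?_⟩
    rw [Fin.sum_univ_succ]
    simp only [Fin.cons_zero, Fin.cons_succ]
    exact sub_eq_iff_eq_add'.1 hx

lemma exists_forall_nonneg_mul_add_of_pos [Fintype κ] {γ d : κ → ℝ}
    (hzero : ∀ i, γ i = 0 → 0 ≤ d i)
    (hpair : ∀ i k, 0 < γ i → γ k < 0 → 0 ≤ γ i * d k - γ k * d i) {i₀ : κ} (hi₀ : 0 < γ i₀) :
    ∃ t, ∀ i, 0 ≤ γ i * t + d i := by
  obtain ⟨j, hj, hmax⟩ :=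
    Finset.exists_max_image {i | 0 < γ i} (fun i => -d i / γ i) ⟨i₀, by simpa using hi₀⟩
  replace hj : 0 < γ j := by simpa using hj
  refine ⟨-d j / γ j, fun i => ?_⟩
  rcases lt_trichotomy (γ i) 0 with hi | hi | hi
  · have : γ i * (-d j / γ j) + d i = (γ j * d i - γ i * d j) / γ j := by field_simp; ring
    rw [this]
    exact div_nonneg (hpair j i hj hi) hj.le
  · simpa [hi] using hzero i hi
  · have := (div_le_iff₀ hi).1 (hmax i (by simpa using hi))
    linarith

theorem exists_forall_nonneg_mul_add_iff [Fintype κ] (γ d : κ → ℝ) :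
    (∃ t, ∀ i, 0 ≤ γ i * t + d i) ↔
      (∀ i, γ i = 0 → 0 ≤ d i) ∧ ∀ i k, 0 < γ i → γ k < 0 → 0 ≤ γ i * d k - γ k * d i := by
  constructor
  · rintro ⟨t, ht⟩
    refine ⟨fun i hi => by simpa [hi] using ht i, fun i k hi hk => ?_⟩
    nlinarith [mul_nonneg hi.le (ht k), mul_nonneg (neg_nonneg.2 hk.le) (ht i)]
  · rintro ⟨hzero, hpair⟩
    by_cases hpos : ∃ i, 0 < γ i
    · obtain ⟨i₀, hi₀⟩ := hpos
      exact exists_forall_nonneg_mul_add_of_pos hzero hpair hi₀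
    by_cases hneg : ∃ k, γ k < 0
    · obtain ⟨k₀, hk₀⟩ := hneg
      obtain ⟨t, ht⟩ := exists_forall_nonneg_mul_add_of_pos (γ := -γ)
        (fun i hi => hzero i (neg_eq_zero.1 hi))
        (fun i k hi hk => by
          simp only [Pi.neg_apply, neg_pos, neg_lt_zero] at hi hk ⊢
          linarith [hpair k i hk hi])
        (neg_pos.2 hk₀)
      exact ⟨-t, fun i => by simpa using ht i⟩
    push Not at hpos hneg
    exact ⟨0, fun i => by simpa using hzero i (le_antisymm (hpos i) (hneg i))⟩

variable [Fintype ι]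

lemma intVec_dotProduct_intVec (a b : ι → ℤ) : intVec a ⬝ᵥ intVec b = ((a ⬝ᵥ b : ℤ) : ℝ) := by
  simp [dotProduct]

def intDual (a : κ → ι → ℤ) : Set (ι → ℝ) := {x | ∀ i, 0 ≤ intVec (a i) ⬝ᵥ x}

lemma exists_fin_intDual_eq [Fintype κ] (a : κ → ι → ℤ) :
    ∃ (M : ℕ) (b : Fin M → ι → ℤ), intDual a = intDual b := by
  refine ⟨_, a ∘ (Fintype.equivFin κ).symm, ?_⟩
  ext x
  exact (Fintype.equivFin κ).symm.forall_congr_right.symm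

lemma isClosed_intDual (a : κ → ι → ℤ) : IsClosed (intDual a) := by
  simp only [intDual, Set.ofPred_forall]
  exact isClosed_iInter fun i => isClosed_le continuous_const (by unfold dotProduct; fun_prop)

lemma dotProduct_nonneg_of_mem_intSpan [Fintype κ] {g : κ → ι → ℤ} {y x : ι → ℝ}
    (hy : y ∈ intSpan g) (hx : x ∈ intDual g) : 0 ≤ y ⬝ᵥ x := by
  obtain ⟨lam, hlam, rfl⟩ := hy
  rw [sum_dotProduct]
  exact Finset.sum_nonneg fun j _ => by
    rw [smul_dotProduct, smul_eq_mul]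
    exact mul_nonneg (hlam j) (hx j)

lemma exists_intDual_eq_zero : ∃ (M : ℕ) (b : Fin M → ι → ℤ), intDual b = {0} := by
  obtain ⟨M, b, hb⟩ := exists_fin_intDual_eq
    (Sum.elim (fun t : ι => Pi.single t 1) (fun t : ι => -Pi.single t 1))
  refine ⟨M, b, ?_⟩
  rw [← hb]
  ext x
  simp only [intDual, Set.mem_ofPred_eq, Sum.forall, Sum.elim_inl, Sum.elim_inr, intVec_single,
    intVec_neg, single_dotProduct, neg_dotProduct, Int.cast_one, one_mul, neg_nonneg,
    Set.mem_singleton_iff, funext_iff, Pi.zero_apply, ← forall_and]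
  exact forall_congr' fun t => ⟨fun h => le_antisymm h.2 h.1, fun h => by simp [h]⟩

theorem exists_intDual_eq_setOf_exists [Fintype κ] (γ : κ → ℤ) (a : κ → ι → ℤ) :
    ∃ (M : ℕ) (b : Fin M → ι → ℤ),
      {x | ∃ t : ℝ, ∀ i, 0 ≤ γ i * t + intVec (a i) ⬝ᵥ x} = intDual b := by
  obtain ⟨M, b, hb⟩ := exists_fin_intDual_eq
    (Sum.elim (fun i : {i // γ i = 0} => a i)
      (fun p : {p : κ × κ // 0 < γ p.1 ∧ γ p.2 < 0} => γ p.1.1 • a p.1.2 - γ p.1.2 • a p.1.1))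
  refine ⟨M, b, ?_⟩
  rw [← hb]
  ext x
  simp only [Set.mem_ofPred_eq, exists_forall_nonneg_mul_add_iff, intDual, Sum.forall,
    Subtype.forall, Prod.forall, Sum.elim_inl, Sum.elim_inr, intVec_sub, intVec_smul,
    sub_dotProduct, smul_dotProduct, smul_eq_mul, Int.cast_eq_zero, Int.cast_pos,
    Int.cast_lt_zero]
  exact and_congr Iff.rfl
    (forall₂_congr fun i k => ⟨fun h hik => h hik.1 hik.2, fun h hi hk => h ⟨hi, hk⟩⟩)

theorem exists_intSpan_fin_eq_intDual :
    ∀ {m : ℕ} (g : Fin m → ι → ℤ), ∃ (M : ℕ) (b : Fin M → ι → ℤ), intSpan g = intDual b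
  | 0, g => by
    obtain ⟨M, b, hb⟩ := exists_intDual_eq_zero (ι := ι)
    exact ⟨M, b, by rw [intSpan_of_isEmpty, hb]⟩
  | m + 1, g => by
    obtain ⟨M, b, hb⟩ := exists_intSpan_fin_eq_intDual (Fin.tail g)
    -- `x ∈ intSpan g` iff some `t ≥ 0` has `0 ≤ b i ⬝ᵥ (x - t • g 0)` for all `i`; eliminate `t`.
    obtain ⟨M', b', hb'⟩ := exists_intDual_eq_setOf_exists
      (fun i : Option (Fin M) => i.elim 1 fun i => -(b i ⬝ᵥ g 0)) (fun i => i.elim 0 b)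
    refine ⟨M', b', ?_⟩
    rw [← hb']
    ext x
    simp only [mem_intSpan_succ_iff, hb, intDual, Set.mem_ofPred_eq, Option.forall,
      Option.elim_none, Option.elim_some, dotProduct_sub, dotProduct_smul,
      intVec_dotProduct_intVec, smul_eq_mul, Int.cast_neg, Int.cast_one, one_mul]
    exact exists_congr fun t => and_congr (by rw [intVec_zero, zero_dotProduct, add_zero])
      (forall_congr' fun i => by rw [neg_mul, neg_add_eq_sub, mul_comm])

theorem exists_intSpan_eq_intDual [Fintype κ] (g : κ → ι → ℤ) :
    ∃ (M : ℕ) (b : Fin M → ι → ℤ), intSpan g = intDual b := by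
  rw [← intSpan_comp_equiv g (Fintype.equivFin κ).symm]
  exact exists_intSpan_fin_eq_intDual _

theorem exists_intDual_eq_intSpan [Fintype κ] (a : κ → ι → ℤ) :
    ∃ (m : ℕ) (g : Fin m → ι → ℤ), intDual a = intSpan g := by
  obtain ⟨m, g, hag⟩ := exists_intSpan_eq_intDual a
  obtain ⟨M, h, hgh⟩ := exists_intSpan_eq_intDual g
  refine ⟨m, g, Set.Subset.antisymm (fun x hx => ?_) (fun x hx i => ?_)⟩
  · rw [hgh]
    intro k
    -- `h k` is nonnegative on every `g j`, so it lies in `intDual g = intSpan a`.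
    have hk : intVec (h k) ∈ intSpan a := by
      rw [hag]
      intro j
      rw [dotProduct_comm (intVec (g j))]
      exact (hgh ▸ intVec_mem_intSpan g j : intVec (g j) ∈ intDual h) k
    exact dotProduct_nonneg_of_mem_intSpan hk hx
  · rw [dotProduct_comm (intVec (a i))]
    exact dotProduct_nonneg_of_mem_intSpan hx (hag ▸ intVec_mem_intSpan a i)

end IntegerCones

variable {n : ℕ}

namespace GraphModel

lemma finite_image_cutWeight (G : GraphModel n) (I : Finset (Fin n)) :
    (G.cutWeight '' {W | G.IsCut I W}).Finite :=
  (Set.toFinite _).image _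

lemma exists_isCut_cutWeight_eq_entropy (G : GraphModel n) (I : Finset (Fin n)) :
    ∃ W, G.IsCut I W ∧ G.cutWeight W = G.entropy I := by
  have hcut : G.IsCut I {v | ∃ i ∈ I, G.color v = some (Fin.castSucc i)} := by
    intro v c hc
    simp [hc, eq_comm]
  exact ((Set.nonempty_of_mem hcut).image _).csInf_mem (G.finite_image_cutWeight I)

lemma entropy_le_cutWeight {G : GraphModel n} {I : Finset (Fin n)} {W : Set G.V}
    (hW : G.IsCut I W) : G.entropy I ≤ G.cutWeight W :=
  csInf_le (G.finite_image_cutWeight I).bddBelow ⟨W, hW, rfl⟩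

lemma entropy_eq_cutWeight {G : GraphModel n} {I : Finset (Fin n)} {W : Set G.V}
    (hW : G.IsCut I W) (hmin : ∀ W', G.IsCut I W' → G.cutWeight W ≤ G.cutWeight W') :
    G.entropy I = G.cutWeight W := by
  obtain ⟨W', hW', hW'e⟩ := G.exists_isCut_cutWeight_eq_entropy I
  exact (entropy_le_cutWeight hW).antisymm (hW'e ▸ hmin W' hW')

def empty (n : ℕ) : GraphModel n where
  V := Empty
  w := Empty.elim
  symm := nofun
  nonneg := nofun
  color := Empty.elim

def smul (c : ℝ) (hc : 0 ≤ c) (G : GraphModel n) : GraphModel n where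
  V := G.V
  w u v := c * G.w u v
  symm u v := by rw [G.symm]
  nonneg u v := mul_nonneg hc (G.nonneg u v)
  color := G.color

/-- The disjoint union of two graph models. -/
def add (G₁ G₂ : GraphModel n) : GraphModel n where
  V := G₁.V ⊕ G₂.V
  w := Sum.elim (fun u => Sum.elim (G₁.w u) 0) (fun u => Sum.elim 0 (G₂.w u))
  symm := by rintro (u | u) (v | v) <;> simp [G₁.symm, G₂.symm]
  nonneg := by rintro (u | u) (v | v) <;> simp [G₁.nonneg, G₂.nonneg]
  color := Sum.elim G₁.color G₂.color

lemma entropyVector_empty : (empty n).entropyVector = 0 := by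
  have hcut : ∀ W, (empty n).cutWeight W = 0 := fun W => Finset.sum_eq_zero nofun
  funext I
  rw [Pi.zero_apply, ← hcut ∅]
  exact entropy_eq_cutWeight nofun fun W' _ => by rw [hcut, hcut]

lemma cutWeight_smul (c : ℝ) (hc : 0 ≤ c) (G : GraphModel n) (W : Set (G.smul c hc).V) :
    (G.smul c hc).cutWeight W = c * G.cutWeight W := by
  simp only [cutWeight, Finset.mul_sum, mul_ite, mul_zero]
  rfl

lemma entropyVector_smul (c : ℝ) (hc : 0 ≤ c) (G : GraphModel n) :
    (G.smul c hc).entropyVector = c • G.entropyVector := by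
  funext I
  obtain ⟨W, hW, hWe⟩ := G.exists_isCut_cutWeight_eq_entropy I.1
  have hmin : (G.smul c hc).entropy I.1 = (G.smul c hc).cutWeight W :=
    entropy_eq_cutWeight hW fun W' hW' => calc
      (G.smul c hc).cutWeight W = c * G.cutWeight W := cutWeight_smul c hc G W
      _ ≤ c * G.cutWeight W' := mul_le_mul_of_nonneg_left (hWe ▸ entropy_le_cutWeight hW') hc
      _ = (G.smul c hc).cutWeight W' := (cutWeight_smul c hc G W').symm
  rw [Pi.smul_apply, smul_eq_mul, entropyVector, entropyVector, hmin, ← hWe]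
  exact cutWeight_smul c hc G W

lemma cutWeight_add (G₁ G₂ : GraphModel n) (W : Set (G₁.add G₂).V) :
    (G₁.add G₂).cutWeight W = G₁.cutWeight (Sum.inl ⁻¹' W) + G₂.cutWeight (Sum.inr ⁻¹' W) := by
  change ∑ u : G₁.V ⊕ G₂.V, ∑ v : G₁.V ⊕ G₂.V, _ = _
  simp [cutWeight, add, Fintype.sum_sum_type]
  rfl

lemma isCut_add {G₁ G₂ : GraphModel n} {I : Finset (Fin n)} {W : Set (G₁.add G₂).V} :
    (G₁.add G₂).IsCut I W ↔ G₁.IsCut I (Sum.inl ⁻¹' W) ∧ G₂.IsCut I (Sum.inr ⁻¹' W) :=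
  Sum.forall

lemma entropyVector_add (G₁ G₂ : GraphModel n) :
    (G₁.add G₂).entropyVector = G₁.entropyVector + G₂.entropyVector := by
  funext I
  obtain ⟨W₁, hW₁, hW₁e⟩ := G₁.exists_isCut_cutWeight_eq_entropy I.1
  obtain ⟨W₂, hW₂, hW₂e⟩ := G₂.exists_isCut_cutWeight_eq_entropy I.1
  simp only [Pi.add_apply, entropyVector]
  rw [← hW₁e, ← hW₂e]
  refine (entropy_eq_cutWeight (G := G₁.add G₂) (W := {x | Sum.elim (· ∈ W₁) (· ∈ W₂) x})
    (isCut_add.2 ⟨hW₁, hW₂⟩) fun W hW => ?_).trans (cutWeight_add G₁ G₂ _)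
  rw [cutWeight_add, cutWeight_add]
  exact add_le_add (hW₁e ▸ entropy_le_cutWeight (isCut_add.1 hW).1)
    (hW₂e ▸ entropy_le_cutWeight (isCut_add.1 hW).2)

/-- The weights of the graph obtained from `G` by identifying vertices with the same image
under `φ`. -/
def pushWeight {β : Type*} (G : GraphModel n) (φ : G.V → β) (p : β × β) : ℝ :=
  ∑ u, ∑ v, if (φ u, φ v) = p then G.w u v else 0

lemma pushWeight_nonneg {β : Type*} (G : GraphModel n) (φ : G.V → β) :
    0 ≤ G.pushWeight φ := fun p =>
  Finset.sum_nonneg fun u _ => Finset.sum_nonneg fun v _ => by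
    split_ifs
    exacts [G.nonneg u v, le_rfl]

lemma pushWeight_swap {β : Type*} (G : GraphModel n) (φ : G.V → β) (p : β × β) :
    G.pushWeight φ p.swap = G.pushWeight φ p := by
  rw [pushWeight, Finset.sum_comm]
  refine Finset.sum_congr rfl fun u _ => Finset.sum_congr rfl fun v _ => ?_
  rw [G.symm]
  congr 1
  rw [← Prod.swap_inj]
  rfl

lemma dotProduct_pushWeight {β : Type*} [Fintype β] (G : GraphModel n) (φ : G.V → β)
    (h : β × β → ℝ) : h ⬝ᵥ G.pushWeight φ = ∑ u, ∑ v, h (φ u, φ v) * G.w u v := by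
  simp only [dotProduct, pushWeight, Finset.mul_sum, mul_ite, mul_zero]
  rw [Finset.sum_comm]
  refine Finset.sum_congr rfl fun u _ => ?_
  rw [Finset.sum_comm]
  exact Finset.sum_congr rfl fun v _ => by simp

end GraphModel

abbrev Subsystem (n : ℕ) : Type := {I : Finset (Fin n) // I.Nonempty}

/-- The holographic entropy cone `C_n`; it is a cone because scaling the weights scales the
entropy vector and disjoint unions add entropy vectors. -/
def entropyCone (n : ℕ) : PointedCone ℝ (Subsystem n → ℝ) where
  carrier := Set.range GraphModel.entropyVector
  add_mem' := by
    rintro _ _ ⟨G₁, rfl⟩ ⟨G₂, rfl⟩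
    exact ⟨G₁.add G₂, G₁.entropyVector_add G₂⟩
  zero_mem' := ⟨GraphModel.empty n, GraphModel.entropyVector_empty⟩
  smul_mem' := by
    rintro ⟨c, hc⟩ _ ⟨G, rfl⟩
    exact ⟨G.smul c hc, G.entropyVector_smul c hc⟩

/-- A vertex of the contracted graph: the subsystems whose chosen minimal cut contains it, and its
color. -/
abbrev Profile (n : ℕ) : Type := Set (Subsystem n) × Option (Fin (n + 1))

namespace Profile

def IsCut (I : Finset (Fin n)) (W : Set (Profile n)) : Prop :=
  ∀ a c, a.2 = some c → (a ∈ W ↔ ∃ i ∈ I, Fin.castSucc i = c)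

/-- Placing colored profiles by their color makes this an `I`-cut, also on the profiles that are
not the profile of any vertex. -/
def canonicalCut (I : Subsystem n) : Set (Profile n) :=
  {a | a.2.elim (I ∈ a.1) fun c => ∃ i ∈ I.1, Fin.castSucc i = c}

lemma isCut_canonicalCut (I : Subsystem n) : IsCut I.1 (canonicalCut I) := by
  intro a c hc
  simp [canonicalCut, hc]

end Profile

def cutIndicator {α : Type*} (W : Set α) (p : α × α) : ℤ :=
  if p.1 ∈ W ∧ p.2 ∉ W then 1 else 0

abbrev profileModel (w : Profile n × Profile n → ℝ) (hw : 0 ≤ w) (hsymm : ∀ p, w p.swap = w p) :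
    GraphModel n where
  V := Profile n
  w u v := w (u, v)
  symm u v := (hsymm (u, v)).symm
  nonneg u v := hw (u, v)
  color := Prod.snd

lemma cutWeight_profileModel (w : Profile n × Profile n → ℝ) (hw : 0 ≤ w)
    (hsymm : ∀ p, w p.swap = w p) (W : Set (Profile n)) :
    (profileModel w hw hsymm).cutWeight W = intVec (cutIndicator W) ⬝ᵥ w := by
  change ∑ u : Profile n, ∑ v : Profile n, (if u ∈ W ∧ v ∉ W then w (u, v) else 0) = _
  rw [← Fintype.sum_prod_type']
  refine Finset.sum_congr rfl fun p _ => ?_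
  simp only [cutIndicator, intVec_apply]
  split_ifs <;> simp

theorem GraphModel.exists_profileModel_entropyVector_eq (G : GraphModel n) :
    ∃ w hw hsymm, (profileModel w hw hsymm).entropyVector = G.entropyVector := by
  choose W hW hWe using fun I : Subsystem n => G.exists_isCut_cutWeight_eq_entropy I.1
  let φ : G.V → Profile n := fun v => ({I | v ∈ W I}, G.color v)
  have hcut (U : Set (Profile n)) :
      (profileModel _ (G.pushWeight_nonneg φ) (G.pushWeight_swap φ)).cutWeight U =
        G.cutWeight (φ ⁻¹' U) := by
    rw [cutWeight_profileModel, dotProduct_pushWeight]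
    simp [cutWeight, cutIndicator]
  have hpre (I : Subsystem n) : φ ⁻¹' Profile.canonicalCut I = W I := by
    ext v
    rcases hv : G.color v with _ | c
    · simp [φ, Profile.canonicalCut, hv]
    · simpa [φ, Profile.canonicalCut, hv] using (hW I v c hv).symm
  refine ⟨_, G.pushWeight_nonneg φ, G.pushWeight_swap φ, funext fun I => ?_⟩
  rw [entropyVector, entropyVector, ← hWe, ← hpre, ← hcut]
  refine entropy_eq_cutWeight (Profile.isCut_canonicalCut I) fun U hU => ?_
  rw [hcut, hcut U, hpre, hWe]
  exact entropy_le_cutWeight fun v c hc => hU (φ v) c hc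

/-- The inequalities on weights `w` saying that `w` is nonnegative and symmetric and that each
`σ I` is a minimal `I`-cut. -/
def cellRows (σ : Subsystem n → Set (Profile n)) :
    (Profile n × Profile n) ⊕ (Profile n × Profile n) ⊕
      {q : Subsystem n × Set (Profile n) // Profile.IsCut q.1.1 q.2} →
      Profile n × Profile n → ℤ :=
  Sum.elim (fun p => Pi.single p 1) <| Sum.elim (fun p => Pi.single p 1 - Pi.single p.swap 1)
    fun q => cutIndicator q.1.2 - cutIndicator (σ q.1.1)

lemma mem_intDual_cellRows {σ : Subsystem n → Set (Profile n)} {w : Profile n × Profile n → ℝ} :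
    w ∈ intDual (cellRows σ) ↔ 0 ≤ w ∧ (∀ p, w p.swap ≤ w p) ∧
      ∀ (I : Subsystem n) U, Profile.IsCut I.1 U →
        intVec (cutIndicator (σ I)) ⬝ᵥ w ≤ intVec (cutIndicator U) ⬝ᵥ w := by
  simp only [intDual, cellRows, Set.mem_ofPred_eq, Sum.forall, Subtype.forall, Sum.elim_inl,
    Sum.elim_inr, intVec_sub, intVec_single, sub_dotProduct, single_dotProduct, Int.cast_one,
    one_mul, sub_nonneg, Prod.forall, Pi.le_def, Prod.swap_prod_mk, Pi.zero_apply]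

theorem entropyVector_profileModel {σ : Subsystem n → Set (Profile n)}
    (hσ : ∀ I : Subsystem n, Profile.IsCut I.1 (σ I)) {w : Profile n × Profile n → ℝ}
    (hw : 0 ≤ w) (hsymm : ∀ p, w p.swap = w p) (hmem : w ∈ intDual (cellRows σ)) :
    (profileModel w hw hsymm).entropyVector = fun I => intVec (cutIndicator (σ I)) ⬝ᵥ w := by
  funext I
  rw [GraphModel.entropyVector, ← cutWeight_profileModel w hw hsymm]
  refine GraphModel.entropy_eq_cutWeight (hσ I) fun U hU => ?_
  rw [cutWeight_profileModel, cutWeight_profileModel w hw hsymm U]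
  exact (mem_intDual_cellRows.1 hmem).2.2 I U hU

theorem GraphModel.exists_cell_entropyVector_eq (G : GraphModel n) :
    ∃ σ : Subsystem n → Set (Profile n), (∀ I : Subsystem n, Profile.IsCut I.1 (σ I)) ∧
      ∃ w ∈ intDual (cellRows σ), G.entropyVector = fun I => intVec (cutIndicator (σ I)) ⬝ᵥ w := by
  obtain ⟨w, hw, hsymm, hG⟩ := G.exists_profileModel_entropyVector_eq
  choose σ hσ hσe using fun I : Subsystem n =>
    (profileModel w hw hsymm).exists_isCut_cutWeight_eq_entropy I.1
  have hmem : w ∈ intDual (cellRows σ) := by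
    refine mem_intDual_cellRows.2 ⟨hw, fun p => (hsymm p).le, fun I U hU => ?_⟩
    rw [← cutWeight_profileModel w hw hsymm, ← cutWeight_profileModel w hw hsymm, hσe]
    exact entropy_le_cutWeight hU
  exact ⟨σ, hσ, w, hmem, by rw [← hG, entropyVector_profileModel hσ hw hsymm hmem]⟩

theorem exists_range_entropyVector_eq_intSpan (n : ℕ) :
    ∃ (m : ℕ) (g : Fin m → Subsystem n → ℤ),
      Set.range (GraphModel.entropyVector (n := n)) = intSpan g := by
  choose m gen hgen using fun σ : Subsystem n → Set (Profile n) =>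
    exists_intDual_eq_intSpan (cellRows σ)
  let Cell := {σ : Subsystem n → Set (Profile n) // ∀ I : Subsystem n, Profile.IsCut I.1 (σ I)}
  let g (k : Σ σ : Cell, Fin (m σ)) (I : Subsystem n) : ℤ := cutIndicator (k.1.1 I) ⬝ᵥ gen k.1 k.2
  refine ⟨_, g ∘ (Fintype.equivFin _).symm, ?_⟩
  rw [intSpan_comp_equiv]
  refine Set.Subset.antisymm ?_ (intSpan_subset g (entropyCone n) fun k => ?_)
  · rintro _ ⟨G, rfl⟩
    obtain ⟨σ, hσ, w, hw, hG⟩ := G.exists_cell_entropyVector_eq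
    rw [hgen σ] at hw
    obtain ⟨lam, hlam, rfl⟩ := hw
    refine intSpan_comp_subset g (Sigma.mk ⟨σ, hσ⟩) ⟨lam, hlam, ?_⟩
    rw [hG]
    funext I
    simp [g, dotProduct_sum, dotProduct_smul, intVec_dotProduct_intVec]
  · obtain ⟨⟨σ, hσ⟩, j⟩ := k
    have hmem : intVec (gen σ j) ∈ intDual (cellRows σ) := hgen σ ▸ intVec_mem_intSpan _ j
    obtain ⟨hw, hsymm, -⟩ := mem_intDual_cellRows.1 hmem
    refine ⟨profileModel _ hw fun p => (hsymm p).antisymm (hsymm p.swap), ?_⟩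
    rw [entropyVector_profileModel hσ _ _ hmem]
    funext I
    simp [g, intVec_dotProduct_intVec]

end

theorem stmt2_general (n : ℕ) :
    ∃ (m : ℕ) (v : Fin m → ({I : Finset (Fin n) // I.Nonempty} → ℝ)),
      (∀ j I, ∃ q : ℚ, v j I = (q : ℝ)) ∧
      ({s | ∃ G : GraphModel n, G.entropyVector = s}
        = {s | ∃ lam : Fin m → ℝ, (∀ j, 0 ≤ lam j) ∧ s = ∑ j, lam j • v j}) ∧
      IsClosed {s | ∃ G : GraphModel n, G.entropyVector = s} ∧
      ∃ (M : ℕ) (c : Fin M → ({I : Finset (Fin n) // I.Nonempty} → ℤ)),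
        {s | ∃ G : GraphModel n, G.entropyVector = s}
          = {s : {I : Finset (Fin n) // I.Nonempty} → ℝ |
              ∀ m', 0 ≤ ∑ I, (c m' I : ℝ) * s I} := by
  obtain ⟨m, g, hg⟩ := exists_range_entropyVector_eq_intSpan n
  obtain ⟨M, c, hc⟩ := exists_intSpan_eq_intDual g
  refine ⟨m, fun j => intVec (g j), fun j I => ⟨g j I, by simp⟩, hg, ?_, M, c, hg.trans hc⟩
  change IsClosed (Set.range _)
  rw [hg, hc]
  exact isClosed_intDual c

/-- The holographic entropy cone `C_n` (the set of entropy vectors of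
graph models on `n` regions) is a rational polyhedral convex cone: it is the set of
nonnegative combinations of finitely many rational vectors.  In particular it is closed
and is cut out by finitely many homogeneous linear inequalities with integer
coefficients. -/
theorem stmt2 (n : ℕ) (hn : 1 ≤ n) :
    ∃ (m : ℕ) (v : Fin m → ({I : Finset (Fin n) // I.Nonempty} → ℝ)),
      (∀ j I, ∃ q : ℚ, v j I = (q : ℝ)) ∧
      ({s | ∃ G : GraphModel n, G.entropyVector = s}
        = {s | ∃ lam : Fin m → ℝ, (∀ j, 0 ≤ lam j) ∧ s = ∑ j, lam j • v j}) ∧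
      IsClosed {s | ∃ G : GraphModel n, G.entropyVector = s} ∧
      ∃ (M : ℕ) (c : Fin M → ({I : Finset (Fin n) // I.Nonempty} → ℤ)),
        {s | ∃ G : GraphModel n, G.entropyVector = s}
          = {s : {I : Finset (Fin n) // I.Nonempty} → ℝ |
              ∀ m', 0 ≤ ∑ I, (c m' I : ℝ) * s I} :=
  stmt2_general n
end

section
/- Strong subadditivity holds for discrete entropies of graph models: for every graph model on 3 regions, S*({1,2}) + S*({2,3}) ≥ S*({2}) + S*({1,2,3}). -/
open Classical

namespace GraphModel

lemma cutWeight_nonneg {n : ℕ} (G : GraphModel n) (W : Set G.V) : 0 ≤ G.cutWeight W := by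
  unfold cutWeight
  refine Finset.sum_nonneg fun u _ => Finset.sum_nonneg fun v _ => ?_
  split_ifs
  · exact G.nonneg u v
  · exact le_refl 0

lemma bddBelow_cuts {n : ℕ} (G : GraphModel n) (I : Finset (Fin n)) :
    BddBelow (G.cutWeight '' {W | G.IsCut I W}) := by
  refine ⟨0, fun x hx => ?_⟩
  obtain ⟨W, _, rfl⟩ := hx
  exact G.cutWeight_nonneg W

lemma exists_cut {n : ℕ} (G : GraphModel n) (I : Finset (Fin n)) :
    (G.cutWeight '' {W | G.IsCut I W}).Nonempty := by
  refine ⟨G.cutWeight {v | ∃ i ∈ I, G.color v = some (Fin.castSucc i)}, ⟨_, ?_, rfl⟩⟩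
  intro v c hc
  simp only [Set.mem_setOf_eq, hc, Option.some.injEq, eq_comm]

lemma isCut_inter {n : ℕ} (G : GraphModel n) {I J : Finset (Fin n)} {W W' : Set G.V}
    (hW : G.IsCut I W) (hW' : G.IsCut J W') : G.IsCut (I ∩ J) (W ∩ W') := by
  intro v c hc
  rw [Set.mem_inter_iff, hW v c hc, hW' v c hc]
  constructor
  · rintro ⟨⟨i, hi, rfl⟩, ⟨j, hj, hji⟩⟩
    exact ⟨i, Finset.mem_inter.2 ⟨hi, by rwa [Fin.castSucc_inj.1 hji] at hj⟩, rfl⟩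
  · rintro ⟨i, hi, rfl⟩
    obtain ⟨hi1, hi2⟩ := Finset.mem_inter.1 hi
    exact ⟨⟨i, hi1, rfl⟩, ⟨i, hi2, rfl⟩⟩

lemma isCut_union {n : ℕ} (G : GraphModel n) {I J : Finset (Fin n)} {W W' : Set G.V}
    (hW : G.IsCut I W) (hW' : G.IsCut J W') : G.IsCut (I ∪ J) (W ∪ W') := by
  intro v c hc
  rw [Set.mem_union, hW v c hc, hW' v c hc]
  constructor
  · rintro (⟨i, hi, rfl⟩ | ⟨i, hi, rfl⟩)
    · exact ⟨i, Finset.mem_union_left _ hi, rfl⟩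
    · exact ⟨i, Finset.mem_union_right _ hi, rfl⟩
  · rintro ⟨i, hi, rfl⟩
    rcases Finset.mem_union.1 hi with h | h
    · exact Or.inl ⟨i, h, rfl⟩
    · exact Or.inr ⟨i, h, rfl⟩

lemma cutWeight_submodular {n : ℕ} (G : GraphModel n) (W W' : Set G.V) :
    G.cutWeight (W ∩ W') + G.cutWeight (W ∪ W') ≤ G.cutWeight W + G.cutWeight W' := by
  unfold cutWeight
  rw [← Finset.sum_add_distrib, ← Finset.sum_add_distrib]
  refine Finset.sum_le_sum fun u _ => ?_
  rw [← Finset.sum_add_distrib, ← Finset.sum_add_distrib]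
  refine Finset.sum_le_sum fun v _ => ?_
  have := G.nonneg u v
  by_cases hA : u ∈ W <;> by_cases hB : u ∈ W' <;> by_cases hC : v ∈ W <;>
    by_cases hD : v ∈ W' <;>
    simp [Set.mem_inter_iff, Set.mem_union, hA, hB, hC, hD] <;> linarith

lemma entropy_le {n : ℕ} (G : GraphModel n) {I : Finset (Fin n)} {W : Set G.V}
    (hW : G.IsCut I W) : G.entropy I ≤ G.cutWeight W :=
  csInf_le (G.bddBelow_cuts I) ⟨W, hW, rfl⟩

end GraphModel

/-- Strong subadditivity for discrete entropies of graph models on 3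
regions: `S*({1,2}) + S*({2,3}) ≥ S*({2}) + S*({1,2,3})`. -/
theorem stmt4 (G : GraphModel 3) :
    G.entropy {0, 1} + G.entropy {1, 2} ≥ G.entropy {1} + G.entropy {0, 1, 2} := by
  have hI : ({0, 1} : Finset (Fin 3)) ∩ {1, 2} = {1} := by decide
  have hU : ({0, 1} : Finset (Fin 3)) ∪ {1, 2} = {0, 1, 2} := by decide
  rw [ge_iff_le]
  have key : ∀ W ∈ {W | G.IsCut {0, 1} W}, ∀ W' ∈ {W | G.IsCut {1, 2} W},
      G.entropy {1} + G.entropy {0, 1, 2} ≤ G.cutWeight W + G.cutWeight W' := by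
    intro W hW W' hW'
    have h1 : G.entropy {1} ≤ G.cutWeight (W ∩ W') := by
      refine G.entropy_le ?_; rw [← hI]; exact G.isCut_inter hW hW'
    have h2 : G.entropy {0, 1, 2} ≤ G.cutWeight (W ∪ W') := by
      refine G.entropy_le ?_; rw [← hU]; exact G.isCut_union hW hW'
    have h3 := G.cutWeight_submodular W W'
    linarith
  have h1 : G.entropy {1} + G.entropy {0, 1, 2} - G.entropy {1, 2} ≤ G.entropy {0, 1} := by
    have e01 : G.entropy {0, 1} = sInf (G.cutWeight '' {W | G.IsCut {0, 1} W}) := rfl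
    rw [e01]
    refine le_csInf (Set.Nonempty.image _ (by
      obtain ⟨x, W, hW, rfl⟩ := G.exists_cut {0, 1}; exact ⟨W, hW⟩)) ?_
    rintro x ⟨W, hW, rfl⟩
    have e12 : G.entropy {1, 2} = sInf (G.cutWeight '' {W | G.IsCut {1, 2} W}) := rfl
    rw [sub_le_iff_le_add, add_comm (G.cutWeight W), ← sub_le_iff_le_add, e12]
    refine le_csInf (by
      obtain ⟨x, W', hW', rfl⟩ := G.exists_cut {1, 2}; exact ⟨_, W', hW', rfl⟩) ?_
    rintro y ⟨W', hW', rfl⟩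
    have := key W hW W' hW'
    linarith
  linarith [h1]
end

section
/- Monogamy of mutual information holds for discrete entropies of graph models: for every graph model on 3 regions, S*({1,2}) + S*({1,3}) + S*({2,3}) ≥ S*({1}) + S*({2}) + S*({3}) + S*({1,2,3}). -/
open Classical

/-- Auxiliary: symmetrized crossing indicator term. -/
noncomputable def MMIed (P Q : Prop) (w : ℝ) : ℝ :=
  (if P ∧ ¬Q then w else 0) + (if Q ∧ ¬P then w else 0)

lemma MMIkey (A B C A' B' C' : Prop) (w : ℝ) (hw : 0 ≤ w) :
    MMIed (A ∧ B ∧ ¬C) (A' ∧ B' ∧ ¬C') w + MMIed (A ∧ ¬B ∧ C) (A' ∧ ¬B' ∧ C') w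
      + MMIed (¬A ∧ B ∧ C) (¬A' ∧ B' ∧ C') w + MMIed (A ∨ B ∨ C) (A' ∨ B' ∨ C') w
    ≤ MMIed A A' w + MMIed B B' w + MMIed C C' w := by
  by_cases hA : A <;> by_cases hB : B <;> by_cases hC : C <;>
    by_cases hA' : A' <;> by_cases hB' : B' <;> by_cases hC' : C' <;>
    simp [MMIed, hA, hB, hC, hA', hB', hC'] <;> linarith

lemma MMI_two_cutWeight {n : ℕ} (G : GraphModel n) (W : Set G.V) :
    ∑ u : G.V, ∑ v : G.V, MMIed (u ∈ W) (v ∈ W) (G.w u v) = 2 * G.cutWeight W := by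
  unfold MMIed GraphModel.cutWeight
  rw [show (2:ℝ) * (∑ u : G.V, ∑ v : G.V, if u ∈ W ∧ v ∉ W then G.w u v else 0)
      = (∑ u : G.V, ∑ v : G.V, if u ∈ W ∧ v ∉ W then G.w u v else 0)
      + (∑ u : G.V, ∑ v : G.V, if u ∈ W ∧ v ∉ W then G.w u v else 0) by ring]
  simp only [Finset.sum_add_distrib]
  congr 1
  rw [Finset.sum_comm]
  apply Finset.sum_congr rfl; intro x _
  apply Finset.sum_congr rfl; intro y _
  rw [G.symm y x]

lemma MMI_cutWeight_nonneg {n : ℕ} (G : GraphModel n) (W : Set G.V) :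
    0 ≤ G.cutWeight W := by
  apply Finset.sum_nonneg; intro u _; apply Finset.sum_nonneg; intro v _
  split <;> simp [G.nonneg u v]

lemma MMI_cuts_nonempty {n : ℕ} (G : GraphModel n) (I : Finset (Fin n)) :
    {W | G.IsCut I W}.Nonempty := by
  refine ⟨{v | ∃ c, G.color v = some c ∧ ∃ i ∈ I, Fin.castSucc i = c}, ?_⟩
  intro v c hc
  constructor
  · rintro ⟨c', hc', h⟩; rw [hc] at hc'; cases hc'; exact h
  · intro h; exact ⟨c, hc, h⟩

lemma MMI_exists_min_cut {n : ℕ} (G : GraphModel n) (I : Finset (Fin n)) :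
    ∃ W, G.IsCut I W ∧ G.cutWeight W = G.entropy I := by
  have hfin : (G.cutWeight '' {W | G.IsCut I W}).Finite := (Set.toFinite _).image _
  have hne : (G.cutWeight '' {W | G.IsCut I W}).Nonempty := (MMI_cuts_nonempty G I).image _
  obtain ⟨W, hW, hEq⟩ := hne.csInf_mem hfin
  exact ⟨W, hW, hEq⟩

lemma MMI_entropy_le {n : ℕ} (G : GraphModel n) (I : Finset (Fin n)) (W : Set G.V)
    (h : G.IsCut I W) : G.entropy I ≤ G.cutWeight W := by
  have hfin : (G.cutWeight '' {W | G.IsCut I W}).Finite := (Set.toFinite _).image _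
  exact csInf_le hfin.bddBelow ⟨W, h, rfl⟩

/-- Monogamy of mutual information for discrete entropies of graph
models on 3 regions:
`S*({1,2}) + S*({1,3}) + S*({2,3}) ≥ S*({1}) + S*({2}) + S*({3}) + S*({1,2,3})`. -/
theorem stmt5 (G : GraphModel 3) :
    G.entropy {0, 1} + G.entropy {0, 2} + G.entropy {1, 2}
      ≥ G.entropy {0} + G.entropy {1} + G.entropy {2} + G.entropy {0, 1, 2} := by
  obtain ⟨W12, h12, e12⟩ := MMI_exists_min_cut G {0, 1}
  obtain ⟨W13, h13, e13⟩ := MMI_exists_min_cut G {0, 2}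
  obtain ⟨W23, h23, e23⟩ := MMI_exists_min_cut G {1, 2}
  set W1 : Set G.V := {v | v ∈ W12 ∧ v ∈ W13 ∧ v ∉ W23} with hW1def
  set W2 : Set G.V := {v | v ∈ W12 ∧ v ∉ W13 ∧ v ∈ W23} with hW2def
  set W3 : Set G.V := {v | v ∉ W12 ∧ v ∈ W13 ∧ v ∈ W23} with hW3def
  set W123 : Set G.V := {v | v ∈ W12 ∨ v ∈ W13 ∨ v ∈ W23} with hW123def
  have hc1 : G.IsCut {0} W1 := by
    intro v c hc
    have a := h12 v c hc; have b := h13 v c hc; have d := h23 v c hc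
    rw [hW1def, Set.mem_setOf_eq, a, b, d]
    fin_cases c <;> decide
  have hc2 : G.IsCut {1} W2 := by
    intro v c hc
    have a := h12 v c hc; have b := h13 v c hc; have d := h23 v c hc
    rw [hW2def, Set.mem_setOf_eq, a, b, d]
    fin_cases c <;> decide
  have hc3 : G.IsCut {2} W3 := by
    intro v c hc
    have a := h12 v c hc; have b := h13 v c hc; have d := h23 v c hc
    rw [hW3def, Set.mem_setOf_eq, a, b, d]
    fin_cases c <;> decide
  have hc123 : G.IsCut {0, 1, 2} W123 := by
    intro v c hc
    have a := h12 v c hc; have b := h13 v c hc; have d := h23 v c hc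
    rw [hW123def, Set.mem_setOf_eq, a, b, d]
    fin_cases c <;> decide
  have hsum : 2 * G.cutWeight W1 + 2 * G.cutWeight W2 + 2 * G.cutWeight W3
      + 2 * G.cutWeight W123
      ≤ 2 * G.cutWeight W12 + 2 * G.cutWeight W13 + 2 * G.cutWeight W23 := by
    rw [← MMI_two_cutWeight G W1, ← MMI_two_cutWeight G W2, ← MMI_two_cutWeight G W3,
      ← MMI_two_cutWeight G W123, ← MMI_two_cutWeight G W12, ← MMI_two_cutWeight G W13,
      ← MMI_two_cutWeight G W23]
    simp only [← Finset.sum_add_distrib]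
    apply Finset.sum_le_sum; intro u _
    apply Finset.sum_le_sum; intro v _
    exact MMIkey (u ∈ W12) (u ∈ W13) (u ∈ W23) (v ∈ W12) (v ∈ W13) (v ∈ W23)
      (G.w u v) (G.nonneg u v)
  have l1 := MMI_entropy_le G {0} W1 hc1
  have l2 := MMI_entropy_le G {1} W2 hc2
  have l3 := MMI_entropy_le G {2} W3 hc3
  have l123 := MMI_entropy_le G {0, 1, 2} W123 hc123
  linarith
end

section
/- The Ingleton inequality holds for discrete entropies of graph models: for every graph model on 4 regions, defining the mutual information I(A:B) := S*(A) + S*(B) − S*(A∪B) and the conditional mutual information I(A:B|C) := S*(A∪C) + S*(B∪C) − S*(C) − S*(A∪B∪C) for pairwise disjoint subsets A,B,C ⊆ {1,2,3,4}, one has I({1}:{2}|{3}) + I({1}:{2}|{4}) + I({3}:{4}) ≥ I({1}:{2}). -/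
open Classical

/-- mutual information `I(A:B) = S*(A) + S*(B) − S*(A∪B)` -/
noncomputable def mutualInfo (G : GraphModel 4) (A B : Finset (Fin 4)) : ℝ :=
  G.entropy A + G.entropy B - G.entropy (A ∪ B)

/-- conditional mutual information
`I(A:B|C) = S*(A∪C) + S*(B∪C) − S*(C) − S*(A∪B∪C)` -/
noncomputable def condMutualInfo (G : GraphModel 4) (A B C : Finset (Fin 4)) : ℝ :=
  G.entropy (A ∪ C) + G.entropy (B ∪ C) - G.entropy C - G.entropy (A ∪ B ∪ C)


namespace Stmt6Aux

def Fq : Bool × Bool × Bool × Bool × Bool → Bool × Bool × Bool × Bool × Bool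
  | (false, false, false, false, false) => (false, false, false, false, false)
  | (false, false, false, false, true) => (false, true, false, false, false)
  | (false, false, false, true, false) => (false, true, false, false, false)
  | (false, false, false, true, true) => (false, true, false, false, true)
  | (false, false, true, false, false) => (false, true, false, false, false)
  | (false, false, true, false, true) => (false, true, false, true, false)
  | (false, false, true, true, false) => (false, true, true, false, false)
  | (false, false, true, true, true) => (false, true, false, false, false)
  | (false, true, false, false, false) => (true, false, false, false, false)
  | (false, true, false, false, true) => (true, true, false, false, false)
  | (false, true, false, true, false) => (true, true, false, false, false)
  | (false, true, false, true, true) => (true, true, false, false, true)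
  | (false, true, true, false, false) => (false, false, false, false, false)
  | (false, true, true, false, true) => (false, true, false, false, false)
  | (false, true, true, true, false) => (false, true, false, false, false)
  | (false, true, true, true, true) => (false, true, false, false, true)
  | (true, false, false, false, false) => (true, false, false, false, false)
  | (true, false, false, false, true) => (true, true, false, false, false)
  | (true, false, false, true, false) => (false, false, false, false, false)
  | (true, false, false, true, true) => (false, true, false, false, false)
  | (true, false, true, false, false) => (true, true, false, false, false)
  | (true, false, true, false, true) => (true, true, false, true, false)
  | (true, false, true, true, false) => (false, true, false, false, false)
  | (true, false, true, true, true) => (false, true, false, true, false)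
  | (true, true, false, false, false) => (true, false, true, false, false)
  | (true, true, false, false, true) => (true, false, false, false, false)
  | (true, true, false, true, false) => (true, false, false, false, false)
  | (true, true, false, true, true) => (true, true, false, false, false)
  | (true, true, true, false, false) => (true, false, false, false, false)
  | (true, true, true, false, true) => (true, true, false, false, false)
  | (true, true, true, true, false) => (false, false, false, false, false)
  | (true, true, true, true, true) => (false, true, false, false, false)


def dB (x y : Bool) : ℕ := if x = y then 0 else 1

def dQ (p q : Bool × Bool × Bool × Bool × Bool) : ℕ :=
  dB p.1 q.1 + dB p.2.1 q.2.1 + dB p.2.2.1 q.2.2.1 + dB p.2.2.2.1 q.2.2.2.1 +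
    dB p.2.2.2.2 q.2.2.2.2

lemma contraction : ∀ p q, dQ (Fq p) (Fq q) ≤ dQ p q := by decide

noncomputable def memB {α : Type} (W : Set α) (v : α) : Bool :=
  if v ∈ W then true else false

lemma memB_iff {α : Type} (W : Set α) (v : α) : memB W v = true ↔ v ∈ W := by
  unfold memB; split <;> simp_all

lemma exists_isCut {n : ℕ} (G : GraphModel n) (I : Finset (Fin n)) :
    ∃ W, G.IsCut I W := by
  refine ⟨{v | ∃ c, G.color v = some c ∧ ∃ i ∈ I, Fin.castSucc i = c}, ?_⟩
  intro v c h
  simp only [Set.mem_setOf_eq]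
  constructor
  · rintro ⟨c', hc', hi⟩
    rw [h] at hc'
    cases Option.some.inj hc'
    exact hi
  · intro hi
    exact ⟨c, h, hi⟩

lemma entropy_le {n : ℕ} (G : GraphModel n) (I : Finset (Fin n)) (W : Set G.V)
    (h : G.IsCut I W) : G.entropy I ≤ G.cutWeight W := by
  have hfin : (G.cutWeight '' {W | G.IsCut I W}).Finite := (Set.toFinite _).image _
  exact csInf_le hfin.bddBelow ⟨W, h, rfl⟩

lemma exists_min {n : ℕ} (G : GraphModel n) (I : Finset (Fin n)) :
    ∃ W, G.IsCut I W ∧ G.cutWeight W = G.entropy I := by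
  obtain ⟨W0, hW0⟩ := exists_isCut G I
  have hfin : (G.cutWeight '' {W | G.IsCut I W}).Finite := (Set.toFinite _).image _
  have hne : (G.cutWeight '' {W | G.IsCut I W}).Nonempty := ⟨_, ⟨W0, hW0, rfl⟩⟩
  obtain ⟨W, hW, hEq⟩ := hne.csInf_mem hfin
  exact ⟨W, hW, hEq⟩

/-- Symmetrized cut weight. -/
noncomputable def cw2 {n : ℕ} (G : GraphModel n) (W : Set G.V) : ℝ :=
  ∑ u : G.V, ∑ v : G.V, if (u ∈ W ↔ v ∈ W) then 0 else G.w u v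

lemma cw2_eq {n : ℕ} (G : GraphModel n) (W : Set G.V) :
    cw2 G W = 2 * G.cutWeight W := by
  have h : ∀ u v : G.V, (if (u ∈ W ↔ v ∈ W) then (0 : ℝ) else G.w u v)
      = (if u ∈ W ∧ v ∉ W then G.w u v else 0)
        + (if v ∈ W ∧ u ∉ W then G.w u v else 0) := by
    intro u v
    by_cases hu : u ∈ W <;> by_cases hv : v ∈ W <;> simp [hu, hv]
  simp only [cw2, h, Finset.sum_add_distrib]
  have h2 : (∑ u : G.V, ∑ v : G.V, if v ∈ W ∧ u ∉ W then G.w u v else 0)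
      = G.cutWeight W := by
    rw [Finset.sum_comm]
    unfold GraphModel.cutWeight
    refine Finset.sum_congr rfl fun u _ => Finset.sum_congr rfl fun v _ => ?_
    rw [G.symm]
  rw [h2]
  unfold GraphModel.cutWeight
  ring

lemma sum5_le {α : Type} [Fintype α] (f1 f2 f3 f4 f5 g1 g2 g3 g4 g5 : α → α → ℝ)
    (h : ∀ u v, f1 u v + f2 u v + f3 u v + f4 u v + f5 u v
      ≤ g1 u v + g2 u v + g3 u v + g4 u v + g5 u v) :
    (∑ u, ∑ v, f1 u v) + (∑ u, ∑ v, f2 u v) + (∑ u, ∑ v, f3 u v)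
        + (∑ u, ∑ v, f4 u v) + (∑ u, ∑ v, f5 u v)
      ≤ (∑ u, ∑ v, g1 u v) + (∑ u, ∑ v, g2 u v) + (∑ u, ∑ v, g3 u v)
        + (∑ u, ∑ v, g4 u v) + (∑ u, ∑ v, g5 u v) := by
  have key := Finset.sum_le_sum (s := (Finset.univ : Finset α))
    (fun u _ => Finset.sum_le_sum (s := (Finset.univ : Finset α)) (fun v _ => h u v))
  simpa [Finset.sum_add_distrib] using key

lemma ite_eq_db (x y : Bool) (r : ℝ) :
    (if (x = true ↔ y = true) then (0 : ℝ) else r) = (dB x y : ℕ) * r := by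
  cases x <;> cases y <;> simp [dB]

lemma isCut_image {G : GraphModel 4} {Wa Wb Wc Wd We : Set G.V}
    {Ia Ib Ic Id Ie : Finset (Fin 4)}
    (ha : G.IsCut Ia Wa) (hb : G.IsCut Ib Wb) (hc : G.IsCut Ic Wc)
    (hd : G.IsCut Id Wd) (he : G.IsCut Ie We)
    (g : Bool × Bool × Bool × Bool × Bool → Bool) (T : Finset (Fin 4))
    (hg : ∀ c : Fin 5,
      g (decide (∃ i ∈ Ia, Fin.castSucc i = c), decide (∃ i ∈ Ib, Fin.castSucc i = c),
         decide (∃ i ∈ Ic, Fin.castSucc i = c), decide (∃ i ∈ Id, Fin.castSucc i = c),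
         decide (∃ i ∈ Ie, Fin.castSucc i = c)) = decide (∃ i ∈ T, Fin.castSucc i = c)) :
    G.IsCut T {v | g (memB Wa v, memB Wb v, memB Wc v, memB Wd v, memB We v) = true} := by
  intro v c h
  have ea : memB Wa v = decide (∃ i ∈ Ia, Fin.castSucc i = c) := by
    rw [Bool.eq_iff_iff, memB_iff, decide_eq_true_eq]; exact ha v c h
  have eb : memB Wb v = decide (∃ i ∈ Ib, Fin.castSucc i = c) := by
    rw [Bool.eq_iff_iff, memB_iff, decide_eq_true_eq]; exact hb v c h
  have ec : memB Wc v = decide (∃ i ∈ Ic, Fin.castSucc i = c) := by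
    rw [Bool.eq_iff_iff, memB_iff, decide_eq_true_eq]; exact hc v c h
  have ed : memB Wd v = decide (∃ i ∈ Id, Fin.castSucc i = c) := by
    rw [Bool.eq_iff_iff, memB_iff, decide_eq_true_eq]; exact hd v c h
  have ee : memB We v = decide (∃ i ∈ Ie, Fin.castSucc i = c) := by
    rw [Bool.eq_iff_iff, memB_iff, decide_eq_true_eq]; exact he v c h
  simp only [Set.mem_setOf_eq, ea, eb, ec, ed, ee, hg c, decide_eq_true_eq]

end Stmt6Aux

open Stmt6Aux

/-- The Ingleton inequality for discrete entropies of graph models on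
4 regions: `I({1}:{2}|{3}) + I({1}:{2}|{4}) + I({3}:{4}) ≥ I({1}:{2})`. -/
theorem stmt6 (G : GraphModel 4) :
    condMutualInfo G {0} {1} {2} + condMutualInfo G {0} {1} {3} + mutualInfo G {2} {3}
      ≥ mutualInfo G {0} {1} := by
  obtain ⟨Wa, ha, hae⟩ := exists_min G ({0} ∪ {2})
  obtain ⟨Wb, hb, hbe⟩ := exists_min G ({1} ∪ {2})
  obtain ⟨Wc, hc, hce⟩ := exists_min G ({0} ∪ {3})
  obtain ⟨Wd, hd, hde⟩ := exists_min G ({1} ∪ {3})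
  obtain ⟨We, he, hee⟩ := exists_min G ({0} ∪ {1})
  set U1 : Set G.V :=
    {v | (Fq (memB Wa v, memB Wb v, memB Wc v, memB Wd v, memB We v)).1 = true} with hU1d
  set U2 : Set G.V :=
    {v | (Fq (memB Wa v, memB Wb v, memB Wc v, memB Wd v, memB We v)).2.1 = true} with hU2d
  set U3 : Set G.V :=
    {v | (Fq (memB Wa v, memB Wb v, memB Wc v, memB Wd v, memB We v)).2.2.1 = true} with hU3d
  set U4 : Set G.V :=
    {v | (Fq (memB Wa v, memB Wb v, memB Wc v, memB Wd v, memB We v)).2.2.2.1 = true} with hU4d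
  set U5 : Set G.V :=
    {v | (Fq (memB Wa v, memB Wb v, memB Wc v, memB Wd v, memB We v)).2.2.2.2 = true} with hU5d
  have hU1 : G.IsCut ({0} ∪ {1} ∪ {2}) U1 :=
    isCut_image ha hb hc hd he (fun q => (Fq q).1) _ (by decide)
  have hU2 : G.IsCut ({0} ∪ {1} ∪ {3}) U2 :=
    isCut_image ha hb hc hd he (fun q => (Fq q).2.1) _ (by decide)
  have hU3 : G.IsCut ({2} ∪ {3}) U3 :=
    isCut_image ha hb hc hd he (fun q => (Fq q).2.2.1) _ (by decide)
  have hU4 : G.IsCut {0} U4 :=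
    isCut_image ha hb hc hd he (fun q => (Fq q).2.2.2.1) _ (by decide)
  have hU5 : G.IsCut {1} U5 :=
    isCut_image ha hb hc hd he (fun q => (Fq q).2.2.2.2) _ (by decide)
  have b1 := entropy_le G _ _ hU1
  have b2 := entropy_le G _ _ hU2
  have b3 := entropy_le G _ _ hU3
  have b4 := entropy_le G _ _ hU4
  have b5 := entropy_le G _ _ hU5
  have hcw : cw2 G U1 + cw2 G U2 + cw2 G U3 + cw2 G U4 + cw2 G U5
      ≤ cw2 G Wa + cw2 G Wb + cw2 G Wc + cw2 G Wd + cw2 G We := by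
    unfold cw2
    apply sum5_le
    intro u v
    have m1 : ∀ x : G.V, x ∈ U1 ↔ (Fq (memB Wa x, memB Wb x, memB Wc x, memB Wd x,
        memB We x)).1 = true := fun x => Iff.rfl
    have m2 : ∀ x : G.V, x ∈ U2 ↔ (Fq (memB Wa x, memB Wb x, memB Wc x, memB Wd x,
        memB We x)).2.1 = true := fun x => Iff.rfl
    have m3 : ∀ x : G.V, x ∈ U3 ↔ (Fq (memB Wa x, memB Wb x, memB Wc x, memB Wd x,
        memB We x)).2.2.1 = true := fun x => Iff.rfl
    have m4 : ∀ x : G.V, x ∈ U4 ↔ (Fq (memB Wa x, memB Wb x, memB Wc x, memB Wd x,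
        memB We x)).2.2.2.1 = true := fun x => Iff.rfl
    have m5 : ∀ x : G.V, x ∈ U5 ↔ (Fq (memB Wa x, memB Wb x, memB Wc x, memB Wd x,
        memB We x)).2.2.2.2 = true := fun x => Iff.rfl
    have mw : ∀ (W : Set G.V) (x : G.V), x ∈ W ↔ memB W x = true :=
      fun W x => (memB_iff W x).symm
    simp only [m1, m2, m3, m4, m5, mw, ite_eq_db]
    have hc := contraction (memB Wa u, memB Wb u, memB Wc u, memB Wd u, memB We u)
      (memB Wa v, memB Wb v, memB Wc v, memB Wd v, memB We v)
    have hc' : ((dQ (Fq (memB Wa u, memB Wb u, memB Wc u, memB Wd u, memB We u))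
        (Fq (memB Wa v, memB Wb v, memB Wc v, memB Wd v, memB We v)) : ℕ) : ℝ)
        * G.w u v
        ≤ ((dQ (memB Wa u, memB Wb u, memB Wc u, memB Wd u, memB We u)
        (memB Wa v, memB Wb v, memB Wc v, memB Wd v, memB We v) : ℕ) : ℝ) * G.w u v :=
      mul_le_mul_of_nonneg_right (Nat.cast_le.mpr hc) (G.nonneg u v)
    simp only [dQ, Nat.cast_add, add_mul] at hc'
    exact hc'
  rw [cw2_eq, cw2_eq, cw2_eq, cw2_eq, cw2_eq, cw2_eq, cw2_eq, cw2_eq, cw2_eq, cw2_eq]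
    at hcw
  unfold condMutualInfo mutualInfo
  linarith
end

section
/- Bulk inequality: let α_1,…,α_L and β_1,…,β_R be positive reals and let f : {0,1}^L → {0,1}^R satisfy ‖f(x) − f(x')‖_β ≤ ‖x − x'‖_α for all x, x' ∈ {0,1}^L, where ‖v‖_α := Σ_l α_l |v_l| and ‖v‖_β := Σ_r β_r |v_r|. Let (V,E) be any finite undirected graph with nonnegative edge weights and let W_1,…,W_L ⊆ V be arbitrary subsets. For x ∈ {0,1}^L set W(x) := ∩_{l=1}^L W_l^{x_l} (with W^1 := W, W^0 := V∖W) and define U_r := ∪ { W(x) : x ∈ {0,1}^L with f(x)_r = 1 } for r = 1,…,R. Then Σ_{l=1}^L α_l |C(W_l)| ≥ Σ_{r=1}^R β_r |C(U_r)|. -/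
open Classical

/-- `|C(W)|`: total weight of the edges of the weighted graph `w` with exactly one
endpoint in `W` (each unordered crossing edge counted once). -/
noncomputable def cutWt {V : Type} [Fintype V] (w : V → V → ℝ) (W : Set V) : ℝ :=
  ∑ u : V, ∑ v : V, if u ∈ W ∧ v ∉ W then w u v else 0

/-- `W(x) = ∩_l W_l^{x_l}` where `W^1 = W` and `W^0 = V ∖ W` -/
def cell {V : Type} {L : ℕ} (Wl : Fin L → Set V) (x : Fin L → Bool) : Set V :=
  {v | ∀ l, v ∈ Wl l ↔ x l = true}

/-- weighted Hamming norm `‖x − x'‖_α` -/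
noncomputable def wdiff {L : ℕ} (α : Fin L → ℝ) (x x' : Fin L → Bool) : ℝ :=
  ∑ l, if x l ≠ x' l then α l else 0

lemma two_cut {V : Type} [Fintype V] (w : V → V → ℝ) (hsymm : ∀ u v, w u v = w v u)
    (g : V → Bool) :
    2 * cutWt w {v | g v = true} = ∑ u : V, ∑ v : V, if g u ≠ g v then w u v else 0 := by
  have h4 : cutWt w {v | g v = true}
      = ∑ u : V, ∑ v : V, if (g u = true ∧ g v ≠ true) then w u v else 0 := by
    unfold cutWt
    refine Finset.sum_congr rfl fun u _ => Finset.sum_congr rfl fun v _ => ?_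
    cases hu : g u <;> cases hv : g v <;> simp [Set.mem_setOf_eq, hu, hv]
  have h3 : (∑ u : V, ∑ v : V, if (g v = true ∧ g u ≠ true) then w u v else 0)
      = ∑ u : V, ∑ v : V, if (g u = true ∧ g v ≠ true) then w u v else 0 := by
    rw [Finset.sum_comm]
    refine Finset.sum_congr rfl fun u _ => Finset.sum_congr rfl fun v _ => ?_
    rw [hsymm]
  have h2 : ∑ u : V, ∑ v : V, (if g u ≠ g v then w u v else 0) =
      (∑ u : V, ∑ v : V, if (g u = true ∧ g v ≠ true) then w u v else 0)
      + (∑ u : V, ∑ v : V, if (g v = true ∧ g u ≠ true) then w u v else 0) := by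
    rw [← Finset.sum_add_distrib]
    refine Finset.sum_congr rfl fun u _ => ?_
    rw [← Finset.sum_add_distrib]
    refine Finset.sum_congr rfl fun v _ => ?_
    cases hu : g u <;> cases hv : g v <;> simp
  rw [h2, h3, h4, two_mul]

/-- Bulk inequality: if `f : {0,1}^L → {0,1}^R` is a
`‖·‖_α`-`‖·‖_β`-contraction, then for arbitrary cuts `W_1,…,W_L` in any finite
weighted graph, with `U_r = ∪ {W(x) : f(x)_r = 1}`, one has
`Σ_l α_l |C(W_l)| ≥ Σ_r β_r |C(U_r)|`. -/
theorem stmt10 (V : Type) [Fintype V] (L R : ℕ) (α : Fin L → ℝ) (β : Fin R → ℝ)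
    (hα : ∀ l, 0 < α l) (hβ : ∀ r, 0 < β r)
    (f : (Fin L → Bool) → (Fin R → Bool))
    (hf : ∀ x x' : Fin L → Bool, wdiff β (f x) (f x') ≤ wdiff α x x')
    (w : V → V → ℝ) (hsymm : ∀ u v, w u v = w v u) (hnn : ∀ u v, 0 ≤ w u v)
    (Wl : Fin L → Set V) :
    ∑ r, β r * cutWt w {v | ∃ x : Fin L → Bool, f x r = true ∧ v ∈ cell Wl x}
      ≤ ∑ l, α l * cutWt w (Wl l) := by
  set prof : V → (Fin L → Bool) := fun v l => decide (v ∈ Wl l) with hprof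
  have hcell : ∀ (v : V) (x : Fin L → Bool), v ∈ cell Wl x ↔ x = prof v := by
    intro v x
    constructor
    · intro h
      funext l
      have := h l
      simp only [hprof]
      cases hx : x l
      · simp [hx] at this; simp [this]
      · simp [hx] at this; simp [this]
    · intro h; subst h
      intro l; simp [hprof]
  have hU : ∀ r, {v | ∃ x : Fin L → Bool, f x r = true ∧ v ∈ cell Wl x}
      = {v | f (prof v) r = true} := by
    intro r
    ext v
    simp only [Set.mem_setOf_eq]
    constructor
    · rintro ⟨x, hx, hv⟩
      rw [hcell] at hv; subst hv; exact hx
    · intro h; exact ⟨prof v, h, (hcell v _).2 rfl⟩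
  have hWl : ∀ l, Wl l = {v | (fun v => prof v l) v = true} := by
    intro l; ext v; simp [hprof]
  -- twice both sides
  have hL : 2 * ∑ r, β r * cutWt w {v | ∃ x : Fin L → Bool, f x r = true ∧ v ∈ cell Wl x}
      = ∑ u : V, ∑ v : V, wdiff β (f (prof u)) (f (prof v)) * w u v := by
    rw [Finset.mul_sum]
    have : ∀ r : Fin R, 2 * (β r * cutWt w {v | ∃ x : Fin L → Bool, f x r = true ∧ v ∈ cell Wl x})
        = β r * ∑ u : V, ∑ v : V, if f (prof u) r ≠ f (prof v) r then w u v else 0 := by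
      intro r
      rw [mul_left_comm, hU r, two_cut w hsymm (fun v => f (prof v) r)]
    calc ∑ r, 2 * (β r * cutWt w {v | ∃ x : Fin L → Bool, f x r = true ∧ v ∈ cell Wl x})
        = ∑ r, ∑ u : V, ∑ v : V, if f (prof u) r ≠ f (prof v) r then β r * w u v else 0 := by
          refine Finset.sum_congr rfl fun r _ => ?_
          rw [this r, Finset.mul_sum]
          refine Finset.sum_congr rfl fun u _ => ?_
          rw [Finset.mul_sum]
          refine Finset.sum_congr rfl fun v _ => ?_
          rw [mul_ite, mul_zero]
      _ = ∑ u : V, ∑ v : V, ∑ r, if f (prof u) r ≠ f (prof v) r then β r * w u v else 0 := by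
          rw [Finset.sum_comm]
          exact Finset.sum_congr rfl fun u _ => Finset.sum_comm
      _ = ∑ u : V, ∑ v : V, wdiff β (f (prof u)) (f (prof v)) * w u v := by
          refine Finset.sum_congr rfl fun u _ => Finset.sum_congr rfl fun v _ => ?_
          rw [wdiff, Finset.sum_mul]
          exact Finset.sum_congr rfl fun r _ => by rw [ite_mul, zero_mul]
  have hR : 2 * ∑ l, α l * cutWt w (Wl l)
      = ∑ u : V, ∑ v : V, wdiff α (prof u) (prof v) * w u v := by
    rw [Finset.mul_sum]
    calc ∑ l, 2 * (α l * cutWt w (Wl l))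
        = ∑ l, ∑ u : V, ∑ v : V, if prof u l ≠ prof v l then α l * w u v else 0 := by
          refine Finset.sum_congr rfl fun l _ => ?_
          rw [mul_left_comm, hWl l, two_cut w hsymm (fun v => prof v l), Finset.mul_sum]
          refine Finset.sum_congr rfl fun u _ => ?_
          rw [Finset.mul_sum]
          refine Finset.sum_congr rfl fun v _ => ?_
          rw [mul_ite, mul_zero]
      _ = ∑ u : V, ∑ v : V, ∑ l, if prof u l ≠ prof v l then α l * w u v else 0 := by
          rw [Finset.sum_comm]
          exact Finset.sum_congr rfl fun u _ => Finset.sum_comm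
      _ = ∑ u : V, ∑ v : V, wdiff α (prof u) (prof v) * w u v := by
          refine Finset.sum_congr rfl fun u _ => Finset.sum_congr rfl fun v _ => ?_
          rw [wdiff, Finset.sum_mul]
          exact Finset.sum_congr rfl fun l _ => by rw [ite_mul, zero_mul]
  have hmain : 2 * ∑ r, β r * cutWt w {v | ∃ x : Fin L → Bool, f x r = true ∧ v ∈ cell Wl x}
      ≤ 2 * ∑ l, α l * cutWt w (Wl l) := by
    rw [hL, hR]
    refine Finset.sum_le_sum fun u _ => Finset.sum_le_sum fun v _ => ?_
    exact mul_le_mul_of_nonneg_right (hf _ _) (hnn u v)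
  linarith
end

section
/- Necessity of the conditions on the cyclic inequalities: let n ≥ 2 and let a, b be integers with 0 ≤ a ≤ n and 0 ≤ b ≤ n. If the inequality C_n(a) − C_n(b) ≥ S*({1,…,n}) holds for the discrete entropies of every graph model on n regions, then a > b and a + b ≤ n. -/
open Classical

/-- The cyclic window of `a` consecutive regions starting at `i` (indices mod `n`);
summing over all `i` this gives the windows `{i+1,…,i+a}` of the paper. -/
noncomputable def cycWindow (n i a : ℕ) : Finset (Fin n) :=
  Finset.univ.filter fun j => ∃ t < a, (i + t) % n = (j : ℕ)

/-- `C_n(a) = Σ_{i=1}^n S({i+1,…,i+a})`: the cyclic sum of the entropies of all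
windows of `a` consecutive regions. -/
noncomputable def cycC {n : ℕ} (S : Finset (Fin n) → ℝ) (a : ℕ) : ℝ :=
  ∑ i ∈ Finset.range n, S (cycWindow n i a)

/-! The star graph with one leaf per region already refutes every other choice of `a, b`.
If its hub is the purifier, the only `I`-cut is the set of leaves of `I`, so `S*(I) = |I|`,
`C_n(m) = n m` and the inequality reads `n (a - b) ≥ n`. If the hub is a bulk vertex, it may
join either side, so `S*(I) = min(|I|, n - |I|)` and `S*({1,…,n}) = 0`; then the inequality
forces `min(b, n - b) ≤ min(a, n - a)`, which together with `b < a` gives `a + b ≤ n`. -/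

open Finset

theorem card_cycWindow {n a : ℕ} (i : ℕ) (ha : a ≤ n) : #(cycWindow n i a) = a := by
  rcases Nat.eq_zero_or_pos n with rfl | hn
  · simp [cycWindow, Nat.le_zero.mp ha]
  have hwin : cycWindow n i a =
      (range a).image fun t => (⟨(i + t) % n, Nat.mod_lt _ hn⟩ : Fin n) := by
    ext j
    simp [cycWindow, Fin.ext_iff, eq_comm]
  rw [hwin, card_image_of_injOn, card_range]
  intro t ht s hs hts
  have hmod : t % n = s % n := Nat.ModEq.add_left_cancel' i (congrArg Fin.val hts)
  rwa [Nat.mod_eq_of_lt ((mem_range.1 ht).trans_le ha),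
    Nat.mod_eq_of_lt ((mem_range.1 hs).trans_le ha)] at hmod

theorem cycC_eq_of_comp_card {n a : ℕ} {S : Finset (Fin n) → ℝ} (f : ℕ → ℝ)
    (hS : ∀ I, S I = f #I) (ha : a ≤ n) : cycC S a = n * f a := by
  simp [cycC, hS, card_cycWindow _ ha]

namespace GraphModel

variable {n : ℕ}

theorem entropy_eq_of_isCut {G : GraphModel n} {I : Finset (Fin n)} {x : ℝ} (W₀ : Set G.V)
    (h₀ : G.IsCut I W₀) (hx : G.cutWeight W₀ = x)
    (hle : ∀ W, G.IsCut I W → x ≤ G.cutWeight W) : G.entropy I = x :=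
  IsLeast.csInf_eq ⟨⟨W₀, h₀, hx⟩, by rintro _ ⟨W, hW, rfl⟩; exact hle W hW⟩

/-- The star with one leaf `some i` of color `i` per region and hub `none` of color `hub`
(`none` for a bulk hub). -/
noncomputable abbrev star (n : ℕ) (hub : Option (Fin (n + 1))) : GraphModel n where
  V := Option (Fin n)
  w u v := if u.isSome = v.isSome then 0 else 1
  symm u v := by rcases u <;> rcases v <;> simp
  nonneg u v := by split <;> norm_num
  color v := v.elim hub fun i => some i.castSucc

variable {hub : Option (Fin (n + 1))} {I : Finset (Fin n)} {W : Set (star n hub).V}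

theorem isCut_star_iff :
    (star n hub).IsCut I W ↔
      (∀ c, hub = some c → (none ∈ W ↔ ∃ i ∈ I, i.castSucc = c)) ∧
        ∀ i, some i ∈ W ↔ i ∈ I := by
  simp [IsCut, star, Option.forall]

theorem cutWeight_star (hW : ∀ i, some i ∈ W ↔ i ∈ I) :
    (star n hub).cutWeight W = if none ∈ W then ((n - #I : ℕ) : ℝ) else #I := by
  by_cases h : none ∈ W
  · simp [cutWeight, Fintype.sum_option, hW, h]
    simp [sum_ite, filter_not, card_sdiff]
  · simp [cutWeight, Fintype.sum_option, hW, h]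

theorem entropy_star_purifier (I : Finset (Fin n)) :
    (star n (some (Fin.last n))).entropy I = #I := by
  have hcut : ∀ W, (star n (some (Fin.last n))).IsCut I W ↔
      none ∉ W ∧ ∀ i, some i ∈ W ↔ i ∈ I := by
    simp [isCut_star_iff, (Fin.castSucc_lt_last _).ne]
  have hweight : ∀ W, (star n (some (Fin.last n))).IsCut I W →
      (star n (some (Fin.last n))).cutWeight W = #I := fun W hW ↦ by
    rw [cutWeight_star ((hcut W).1 hW).2, if_neg ((hcut W).1 hW).1]
  have hW₀ : (star n (some (Fin.last n))).IsCut I (some '' I) := by simp [hcut]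
  exact entropy_eq_of_isCut _ hW₀ (hweight _ hW₀) fun W hW ↦ (hweight W hW).ge

theorem entropy_star_bulk (I : Finset (Fin n)) :
    (star n none).entropy I = ((min #I (n - #I) : ℕ) : ℝ) := by
  have hcut : ∀ W, (star n none).IsCut I W ↔ ∀ i, some i ∈ W ↔ i ∈ I := by
    simp [isCut_star_iff]
  have hle : ∀ W, (star n none).IsCut I W →
      ((min #I (n - #I) : ℕ) : ℝ) ≤ (star n none).cutWeight W := fun W hW ↦ by
    rw [cutWeight_star ((hcut W).1 hW)]
    split <;> gcongr <;> omega
  rcases le_total #I (n - #I) with h | h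
  · refine entropy_eq_of_isCut (some '' I) (by simp [hcut]) ?_ hle
    rw [cutWeight_star (I := I) (by simp), if_neg (by simp), min_eq_left h]
  · refine entropy_eq_of_isCut (insert none (some '' I)) (by simp [hcut]) ?_ hle
    rw [cutWeight_star (I := I) (by simp), if_pos (by simp), min_eq_right h]

end GraphModel

open GraphModel in
/-- Necessity of the conditions on the cyclic inequalities: if
`C_n(a) − C_n(b) ≥ S*({1,…,n})` holds for every graph model on `n` regions
(`n ≥ 2`, `0 ≤ a, b ≤ n`), then `a > b` and `a + b ≤ n`. -/
theorem stmt13 (n : ℕ) (hn : 2 ≤ n) (a b : ℕ) (ha : a ≤ n) (hb : b ≤ n)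
    (h : ∀ G : GraphModel n,
      cycC G.entropy a - cycC G.entropy b ≥ G.entropy Finset.univ) :
    b < a ∧ a + b ≤ n := by
  have hn0 : 0 < n := by omega
  have hba : b < a := by
    have hpur := h (star n (some (Fin.last n)))
    rw [cycC_eq_of_comp_card _ entropy_star_purifier ha,
      cycC_eq_of_comp_card _ entropy_star_purifier hb, entropy_star_purifier, card_univ,
      Fintype.card_fin] at hpur
    have : n * (b + 1) ≤ n * a := by exact_mod_cast (by linarith : (n : ℝ) * (b + 1) ≤ n * a)
    exact Nat.le_of_mul_le_mul_left this hn0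
  have hmin : min b (n - b) ≤ min a (n - a) := by
    have hbulk := h (star n none)
    have hC := fun m ↦ cycC_eq_of_comp_card (fun k ↦ ((min k (n - k) : ℕ) : ℝ))
      entropy_star_bulk (a := m)
    rw [hC _ ha, hC _ hb, entropy_star_bulk, card_univ, Fintype.card_fin, Nat.sub_self,
      _root_.min_zero, Nat.cast_zero] at hbulk
    have : n * min b (n - b) ≤ n * min a (n - a) := by
      exact_mod_cast (by linarith : (n : ℝ) * (min b (n - b) : ℕ) ≤ n * (min a (n - a) : ℕ))
    exact Nat.le_of_mul_le_mul_left this hn0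
  omega
end

section
/- The map g_k is a contraction: for every k ≥ 1 and all nonzero bitstrings x, x' ∈ {0,1}^{2k+1} ∖ {0}, the Hamming distance satisfies ‖g_k(x) − g_k(x')‖₁ ≤ ‖x − x'‖₁. -/
/-!
Walk from `x` to `x'` one coordinate at a time, first raising the coordinates where only `x'`
is `1` and then lowering those where only `x` is `1`; every intermediate string dominates `x` or
`x'`, so it stays nonzero. It therefore suffices that lowering a single `1` at position `i`
changes `g_k` in at most one coordinate. If `a` zeros precede `i` and `b` zeros follow it,
lowering `i` merges these two blocks into one block of length `a + b + 1` starting at `i - a`.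
Away from `i - a` and `i + 1` nothing changes; at `i + 1` the output changes iff `b` is odd, at
`i - a` iff `b` is even.
-/

/-- The number of consecutive zeros of `x` cyclically following position `j`
(capped at `2k`, which is no restriction when `x` is nonzero). -/
def runAfter (k : ℕ) (x : Fin (2 * k + 1) → Bool) (j : Fin (2 * k + 1)) : ℕ :=
  (Finset.univ.filter fun t : Fin (2 * k + 1) =>
    0 < (t : ℕ) ∧ ∀ s : Fin (2 * k + 1), 0 < (s : ℕ) → (s : ℕ) ≤ (t : ℕ) →
      x (j + s) = false).card

/-- The map `g_k` on bitstrings of length `2k+1` (coordinates regarded cyclically):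
it fixes every coordinate equal to `1`; on each maximal cyclic block of consecutive
zeros it maps every coordinate to `1`, except that on blocks of odd length the first
coordinate of the block (in cyclic order) stays `0`.  Equivalently, position `j` maps
to `0` iff `x j = 0`, the cyclic predecessor satisfies `x (j-1) = 1` (so `j` is the
first coordinate of its block of zeros), and the number of zeros cyclically following
`j` is even (so the block has odd length). -/
def gmap (k : ℕ) (x : Fin (2 * k + 1) → Bool) : Fin (2 * k + 1) → Bool :=
  fun j =>
    if x j = false ∧ x (j - 1) = true ∧ runAfter k x j % 2 = 0 then false else true

section Lipschitz

variable {ι β : Type*} [Fintype ι] [DecidableEq β]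

lemma hammingDist_le_one_of_forall_ne {f g : ι → β}
    (j₀ : ι) (h : ∀ j ≠ j₀, f j = g j) : hammingDist f g ≤ 1 :=
  Finset.card_le_one.2 fun a ha b hb => by
    simp only [Finset.mem_filter, Finset.mem_univ, true_and] at ha hb
    exact (not_imp_comm.1 (h a) ha).trans (not_imp_comm.1 (h b) hb).symm

variable [DecidableEq ι]

lemma hammingDist_update_add_one {x y : ι → Bool} {i : ι} (h : x i ≠ y i) :
    hammingDist (Function.update x i (y i)) y + 1 = hammingDist x y := by
  have hset : (Finset.univ.filter fun j => Function.update x i (y i) j ≠ y j) =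
      (Finset.univ.filter fun j => x j ≠ y j).erase i := by
    ext j
    by_cases hj : j = i <;> simp [hj]
  simp only [hammingDist, hset]
  exact Finset.card_erase_add_one (by simpa using h)

lemma exists_update_mem_of_ne {S : Set (ι → Bool)} (hS : IsUpperSet S) {x y : ι → Bool}
    (hx : x ∈ S) (hy : y ∈ S) (hxy : x ≠ y) :
    ∃ i, x i ≠ y i ∧ Function.update x i (y i) ∈ S := by
  by_cases hraise : ∃ i, x i = false ∧ y i = true
  · obtain ⟨i, hxi, hyi⟩ := hraise
    refine ⟨i, by simp [hxi, hyi], hS ?_ hx⟩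
    rw [le_update_iff]
    simp [hyi]
  · obtain ⟨i, hi⟩ := Function.ne_iff.1 hxy
    refine ⟨i, hi, hS ?_ hy⟩
    rw [le_update_iff]
    refine ⟨le_rfl, fun j _ => ?_⟩
    cases hyj : y j <;> cases hxj : x j <;> simp_all

theorem hammingDist_le_of_update_false {S : Set (ι → Bool)} (hS : IsUpperSet S)
    {f : (ι → Bool) → ι → β}
    (hf : ∀ x i, x i = true → Function.update x i false ∈ S →
      hammingDist (f x) (f (Function.update x i false)) ≤ 1)
    {x y : ι → Bool} (hx : x ∈ S) (hy : y ∈ S) :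
    hammingDist (f x) (f y) ≤ hammingDist x y := by
  induction hxy : hammingDist x y generalizing x with
  | zero => simp [hammingDist_eq_zero.1 hxy]
  | succ d ih =>
    obtain ⟨i, hi, hzS⟩ := exists_update_mem_of_ne hS hx hy (hammingDist_ne_zero.1 (by omega))
    have hupd := hammingDist_update_add_one hi
    set z := Function.update x i (y i)
    have hzy : hammingDist z y = d := by omega
    have hxz : hammingDist (f x) (f z) ≤ 1 := by
      cases hxi : x i
      · have hyi : y i = true := by simpa [hxi] using hi.symm
        have hzx : Function.update z i false = x := by simp [z, hyi, ← hxi]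
        have := hf z i (by simp [z, hyi]) (hzx ▸ hx)
        rwa [hzx, hammingDist_comm] at this
      · have hyi : y i = false := by simpa [hxi] using hi.symm
        simp only [z, hyi] at hzS ⊢
        exact hf x i hxi hzS
    calc hammingDist (f x) (f y) ≤ hammingDist (f x) (f z) + hammingDist (f z) (f y) :=
          hammingDist_triangle _ _ _
      _ ≤ 1 + d := add_le_add hxz (hzy ▸ ih hzS hzy)
      _ = d + 1 := add_comm _ _

end Lipschitz

/-- Indexed from `1`: `ZeroRun (fun s => x (j + s)) r` says exactly `r` zeros follow `j`. -/
def ZeroRun (f : ℕ → Bool) (r : ℕ) : Prop :=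
  (∀ s, 1 ≤ s → s ≤ r → f s = false) ∧ f (r + 1) = true

namespace ZeroRun

variable {f g : ℕ → Bool} {r r' : ℕ}

lemma unique (h : ZeroRun f r) (h' : ZeroRun f r') : r = r' := by
  rcases lt_trichotomy r r' with hlt | heq | hlt
  · simpa [h.2] using h'.1 (r + 1) (by omega) hlt
  · exact heq
  · simpa [h'.2] using h.1 (r' + 1) (by omega) hlt

lemma congr (h : ZeroRun f r) (hfg : ∀ s, 1 ≤ s → s ≤ r + 1 → f s = g s) : ZeroRun g r :=
  ⟨fun s hs1 hs2 => hfg s hs1 (by omega) ▸ h.1 s hs1 hs2, hfg (r + 1) (by omega) le_rfl ▸ h.2⟩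

lemma exists_lt {m : ℕ} (hm : 1 ≤ m) (hfm : f m = true) : ∃ r < m, ZeroRun f r := by
  have hex : ∃ t, f (t + 1) = true := ⟨m - 1, by rwa [Nat.sub_add_cancel hm]⟩
  refine ⟨Nat.find hex, ?_, fun s hs1 hs2 => ?_, Nat.find_spec hex⟩
  · have := Nat.find_min' hex (show f (m - 1 + 1) = true by rwa [Nat.sub_add_cancel hm])
    omega
  · have := Nat.find_min hex (show s - 1 < Nat.find hex by omega)
    simpa [Nat.sub_add_cancel hs1] using this

end ZeroRun

open Fin.NatCast Fin.CommRing

section Cyclic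

variable {k : ℕ}

lemma natCast_ne_zero_of_le {s : ℕ} (h1 : 1 ≤ s) (h2 : s ≤ 2 * k) :
    (s : Fin (2 * k + 1)) ≠ 0 := by
  rw [Ne, Fin.natCast_eq_zero]
  exact fun h => by have := Nat.le_of_dvd (by omega) h; omega

lemma add_natCast_ne_self (i : Fin (2 * k + 1)) {s : ℕ} (h1 : 1 ≤ s) (h2 : s ≤ 2 * k) :
    i + s ≠ i := fun h => natCast_ne_zero_of_le h1 h2 (add_eq_left.1 h)

lemma sub_natCast_ne_self (i : Fin (2 * k + 1)) {s : ℕ} (h1 : 1 ≤ s) (h2 : s ≤ 2 * k) :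
    i - s ≠ i := fun h => natCast_ne_zero_of_le h1 h2 (sub_eq_self.1 h)

lemma exists_eq_add_natCast {i j : Fin (2 * k + 1)} (h : i ≠ j) :
    ∃ m : ℕ, 1 ≤ m ∧ m ≤ 2 * k ∧ j = i + m := by
  refine ⟨(j - i : Fin (2 * k + 1)), ?_, by omega, by rw [Fin.cast_val_eq_self]; ring⟩
  have := (j - i).isLt
  have : j - i ≠ 0 := sub_ne_zero.2 h.symm
  have : ((j - i : Fin (2 * k + 1)) : ℕ) ≠ 0 := Fin.val_ne_iff.2 this
  omega

lemma runAfter_eq_of_zeroRun {x : Fin (2 * k + 1) → Bool} {j : Fin (2 * k + 1)} {r : ℕ}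
    (hr : r < 2 * k) (h : ZeroRun (fun s => x (j + s)) r) : runAfter k x j = r := by
  have hlt : ∀ m ∈ Finset.Icc 1 r, m < 2 * k + 1 := fun m hm => by
    have := (Finset.mem_Icc.1 hm).2; omega
  rw [runAfter, show r = (Finset.Icc 1 r).card by simp, ← Finset.card_attachFin _ hlt]
  congr 1
  ext t
  simp only [Finset.mem_filter, Finset.mem_univ, true_and, Finset.mem_attachFin, Finset.mem_Icc]
  constructor
  · rintro ⟨ht, hzero⟩
    refine ⟨ht, not_lt.1 fun hrt => ?_⟩
    have hval : (((r + 1 : ℕ) : Fin (2 * k + 1)) : ℕ) = r + 1 := Fin.val_cast_of_lt (by omega)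
    have hend : x (j + ((r + 1 : ℕ) : Fin (2 * k + 1))) = true := h.2
    rw [hzero _ (by omega) (by omega)] at hend
    exact Bool.false_ne_true hend
  · rintro ⟨ht1, htr⟩
    exact ⟨ht1, fun s hs hst => by simpa using h.1 s hs (by omega)⟩

end Cyclic

section Gmap

variable {k : ℕ} {x : Fin (2 * k + 1) → Bool} {j : Fin (2 * k + 1)}

lemma gmap_eq_true_of_not (h : ¬(x j = false ∧ x (j - 1) = true)) : gmap k x j = true := by
  rw [gmap, if_neg fun h' => h ⟨h'.1, h'.2.1⟩]

lemma gmap_eq_decide_odd {r : ℕ} (hj : x j = false) (hj1 : x (j - 1) = true) (hr : r < 2 * k)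
    (h : ZeroRun (fun s => x (j + s)) r) : gmap k x j = decide (Odd r) := by
  rw [gmap, runAfter_eq_of_zeroRun hr h]
  rcases Nat.mod_two_eq_zero_or_one r with hr2 | hr2 <;> simp [hj, hj1, hr2, Nat.odd_iff]

lemma zeroRun_sub_of_zeroRun_add {i : Fin (2 * k + 1)} {r : ℕ} (hj : x j = false)
    (hj1 : x (j - 1) = true) (hr : ZeroRun (fun s => x (j + s)) r) (hi : j + (r + 1 : ℕ) = i) :
    ZeroRun (fun s => x (i - s)) (r + 1) := by
  refine ⟨fun s hs1 hs2 => ?_, ?_⟩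
  · have e : i - s = j + ((r + 1 - s : ℕ) : Fin (2 * k + 1)) := by
      rw [← hi, Nat.cast_sub hs2]; ring
    rcases (show s = r + 1 ∨ s ≤ r by omega) with rfl | hsr
    · show x (i - ((r + 1 : ℕ) : Fin (2 * k + 1))) = false
      rw [e]
      simpa using hj
    · simpa only [e] using hr.1 (r + 1 - s) (by omega) (by omega)
  · show x (i - ((r + 1 + 1 : ℕ) : Fin (2 * k + 1))) = true
    rw [← hi]
    convert hj1 using 2
    push_cast; ring

end Gmap

section Flip

variable {k : ℕ} {x : Fin (2 * k + 1) → Bool} {i : Fin (2 * k + 1)} {a b : ℕ}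

lemma gmap_update_false_eq_of_ne (hxi : x i = true) (ha : ZeroRun (fun s => x (i - s)) a)
    (ha2k : a < 2 * k) {j : Fin (2 * k + 1)} (hja : j ≠ i - a) (hj1 : j ≠ i + 1) :
    gmap k (Function.update x i false) j = gmap k x j := by
  by_cases hji : j = i
  · subst hji
    obtain rfl | ha1 := Nat.eq_zero_or_pos a
    · simp at hja
    have hpred : x (j - 1) = false := by simpa using ha.1 1 le_rfl ha1
    have hne : j - 1 ≠ j := by simpa using sub_natCast_ne_self j (s := 1) le_rfl (by omega)
    rw [gmap_eq_true_of_not (by simp [hpred, hne]), gmap_eq_true_of_not (by simp [hxi])]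
  have hj1' : j - 1 ≠ i := fun h => hj1 (by rw [← h]; ring)
  by_cases hstart : x j = false ∧ x (j - 1) = true
  swap
  · rw [gmap_eq_true_of_not hstart, gmap_eq_true_of_not (by simpa [hji, hj1'] using hstart)]
  obtain ⟨m, hm1, hm2, hm⟩ := exists_eq_add_natCast hji
  obtain ⟨r, hrm, hr⟩ := ZeroRun.exists_lt (f := fun s => x (j + s)) hm1 (by rwa [← hm])
  have hne : ∀ s, 1 ≤ s → s ≤ r + 1 → j + s ≠ i := by
    intro s hs1 hs2 hs
    rcases (show s ≤ r ∨ s = r + 1 by omega) with hsr | rfl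
    · simpa [hs, hxi] using hr.1 s hs1 hsr
    apply hja
    rw [ha.unique (zeroRun_sub_of_zeroRun_add hstart.1 hstart.2 hr hs), ← hs]
    ring
  rw [gmap_eq_decide_odd hstart.1 hstart.2 (by omega) hr,
    gmap_eq_decide_odd (by simpa [hji] using hstart.1) (by simpa [hj1'] using hstart.2) (by omega)
      (hr.congr fun s hs1 hs2 => (Function.update_of_ne (hne s hs1 hs2) _ _).symm)]

lemma gmap_add_one_of_zeroRun (hxi : x i = true) (hb : ZeroRun (fun s => x (i + s)) b)
    (hb2k : b < 2 * k) : gmap k x (i + 1) = decide (Even b) := by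
  obtain rfl | hb1 := Nat.eq_zero_or_pos b
  · exact gmap_eq_true_of_not (by simp [show x (i + 1) = true by simpa using hb.2])
  have e : ∀ s : ℕ, i + 1 + (s : Fin (2 * k + 1)) = i + ((s + 1 : ℕ) : Fin (2 * k + 1)) := by
    intro s; push_cast; ring
  have hrun : ZeroRun (fun s => x (i + 1 + s)) (b - 1) :=
    ⟨fun s hs1 hs2 => by simpa only [e] using hb.1 (s + 1) (by omega) (by omega),
      by simpa only [e, Nat.sub_add_cancel hb1] using hb.2⟩
  rw [gmap_eq_decide_odd (by simpa using hb.1 1 le_rfl hb1) (by simpa using hxi) (by omega) hrun]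
  simp only [decide_eq_decide, Nat.odd_iff, Nat.even_iff]
  omega

lemma gmap_sub_of_zeroRun (hxi : x i = true) (ha : ZeroRun (fun s => x (i - s)) a)
    (ha2k : a < 2 * k) : gmap k x (i - a) = decide (Even a) := by
  obtain rfl | ha1 := Nat.eq_zero_or_pos a
  · exact gmap_eq_true_of_not (by simp [hxi])
  have hpred : i - a - 1 = i - ((a + 1 : ℕ) : Fin (2 * k + 1)) := by push_cast; ring
  have hrun : ZeroRun (fun s => x (i - a + s)) (a - 1) := by
    refine ⟨fun s hs1 hs2 => ?_, ?_⟩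
    · have e : i - a + s = i - ((a - s : ℕ) : Fin (2 * k + 1)) := by
        rw [Nat.cast_sub (by omega)]; ring
      simpa only [e] using ha.1 (a - s) (by omega) (by omega)
    · simpa [Nat.sub_add_cancel ha1] using hxi
  rw [gmap_eq_decide_odd (ha.1 a ha1 le_rfl) (by rw [hpred]; exact ha.2) (by omega) hrun]
  simp only [decide_eq_decide, Nat.odd_iff, Nat.even_iff]
  omega

lemma update_false_sub_natCast (ha : ZeroRun (fun s => x (i - s)) a) (ha2k : a < 2 * k)
    {t : ℕ} (ht : t ≤ a) : Function.update x i false (i - t) = false := by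
  obtain rfl | ht1 := Nat.eq_zero_or_pos t
  · simp
  rw [Function.update_of_ne (sub_natCast_ne_self i ht1 (by omega))]
  exact ha.1 t ht1 ht

lemma update_false_add_natCast (hb : ZeroRun (fun s => x (i + s)) b) (hb2k : b < 2 * k)
    {t : ℕ} (ht : t ≤ b) : Function.update x i false (i + t) = false := by
  obtain rfl | ht1 := Nat.eq_zero_or_pos t
  · simp
  rw [Function.update_of_ne (add_natCast_ne_self i ht1 (by omega))]
  exact hb.1 t ht1 ht

lemma gmap_update_false_sub_of_zeroRun (ha : ZeroRun (fun s => x (i - s)) a)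
    (hb : ZeroRun (fun s => x (i + s)) b) (hab : a + b < 2 * k) :
    gmap k (Function.update x i false) (i - a) = decide (Odd (a + b)) := by
  have hpred : i - a - 1 = i - ((a + 1 : ℕ) : Fin (2 * k + 1)) := by push_cast; ring
  have hrun : ZeroRun (fun s => Function.update x i false (i - a + s)) (a + b) := by
    refine ⟨fun s hs1 hs2 => ?_, ?_⟩
    · rcases le_total s a with hsa | has
      · have e : i - a + s = i - ((a - s : ℕ) : Fin (2 * k + 1)) := by
          rw [Nat.cast_sub hsa]; ring
        simpa only [e] using update_false_sub_natCast ha (by omega) (Nat.sub_le a s)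
      · have e : i - a + s = i + ((s - a : ℕ) : Fin (2 * k + 1)) := by
          rw [Nat.cast_sub has]; ring
        simpa only [e] using update_false_add_natCast hb (by omega) (show s - a ≤ b by omega)
    · have e : i - a + ((a + b + 1 : ℕ) : Fin (2 * k + 1)) =
          i + ((b + 1 : ℕ) : Fin (2 * k + 1)) := by
        push_cast; ring
      show Function.update x i false (i - a + ((a + b + 1 : ℕ) : Fin (2 * k + 1))) = true
      rw [e, Function.update_of_ne (add_natCast_ne_self i (by omega) (by omega))]
      exact hb.2
  refine gmap_eq_decide_odd (update_false_sub_natCast ha (by omega) le_rfl) ?_ hab hrun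
  rw [hpred, Function.update_of_ne (sub_natCast_ne_self i (by omega) (by omega))]
  exact ha.2

theorem hammingDist_gmap_update_false_le_one (hxi : x i = true)
    (hx' : Function.update x i false ≠ fun _ => false) :
    hammingDist (gmap k x) (gmap k (Function.update x i false)) ≤ 1 := by
  obtain ⟨p, hp⟩ : ∃ p, Function.update x i false p = true := by
    by_contra h
    exact hx' (funext fun p => by simpa using not_exists.1 h p)
  have hpi : p ≠ i := by rintro rfl; simp at hp
  rw [Function.update_of_ne hpi] at hp
  obtain ⟨m, hm1, hm2, rfl⟩ := exists_eq_add_natCast hpi.symm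
  obtain ⟨b, hbm, hb⟩ := ZeroRun.exists_lt (f := fun s => x (i + s)) hm1 hp
  have hwrap : i - ((2 * k + 1 - m : ℕ) : Fin (2 * k + 1)) = i + m := by
    rw [Nat.cast_sub (by omega), Fin.natCast_self]; ring
  obtain ⟨a, ham, ha⟩ := ZeroRun.exists_lt (f := fun s => x (i - s)) (m := 2 * k + 1 - m)
    (by omega) (by simpa only [hwrap] using hp)
  have hsucc : gmap k (Function.update x i false) (i + 1) = true := gmap_eq_true_of_not (by simp)
  rcases Nat.even_or_odd b with hbe | hbo
  · refine hammingDist_le_one_of_forall_ne (i - a) fun j hja => ?_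
    by_cases hj1 : j = i + 1
    · rw [hj1, gmap_add_one_of_zeroRun hxi hb (by omega), hsucc, decide_eq_true hbe]
    · exact (gmap_update_false_eq_of_ne hxi ha (by omega) hja hj1).symm
  · refine hammingDist_le_one_of_forall_ne (i + 1) fun j hj1 => ?_
    by_cases hja : j = i - a
    · rw [hja, gmap_sub_of_zeroRun hxi ha (by omega),
        gmap_update_false_sub_of_zeroRun ha hb (by omega), decide_eq_decide, Nat.even_iff,
        Nat.odd_iff]
      rw [Nat.odd_iff] at hbo
      omega
    · exact (gmap_update_false_eq_of_ne hxi ha (by omega) hja hj1).symm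

end Flip

theorem stmt16_general (k : ℕ) (x x' : Fin (2 * k + 1) → Bool)
    (hx : x ≠ fun _ => false) (hx' : x' ≠ fun _ => false) :
    hammingDist (gmap k x) (gmap k x') ≤ hammingDist x x' := by
  have hS : IsUpperSet {y : Fin (2 * k + 1) → Bool | y ≠ fun _ => false} :=
    fun y z hyz hy hz => hy (funext fun j => le_bot_iff.1 (by simpa [hz] using hyz j))
  exact hammingDist_le_of_update_false hS
    (fun y i hyi hy => hammingDist_gmap_update_false_le_one hyi hy) hx hx'

/-- The map `g_k` is a contraction: for all nonzero bitstrings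
`x, x' ∈ {0,1}^{2k+1}`, the Hamming distance satisfies
`‖g_k(x) − g_k(x')‖₁ ≤ ‖x − x'‖₁`. -/
theorem stmt16 (k : ℕ) (hk : 1 ≤ k) (x x' : Fin (2 * k + 1) → Bool)
    (hx : x ≠ fun _ => false) (hx' : x' ≠ fun _ => false) :
    hammingDist (gmap k x) (gmap k x') ≤ hammingDist x x' :=
  stmt16_general k x x' hx hx'
end
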